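/- arXiv:1002.4500 — 7 statements merged into one kernel-verified Lean document; each statement's English description precedes it below -/
import Mathlib

section
/- For coprime integers p, q ≥ 2, the integral of the Tristram–Levine signature function of the torus knot T_{p,q} over the unit circle satisfies ∫₀¹ σ(e^{2πix}) dx = −(1/3)(p − 1/p)(q − 1/q). -/
open scoped Classical

/-- The set Σ(p,q) = {k/p + l/q : 1 ≤ k ≤ p−1, 1 ≤ l ≤ q−1} ⊆ ℝ. -/
noncomputable def sigmaSet (p q : ℕ) : Finset ℝ :=
  ((Finset.Icc 1 (p - 1)) ×ˢ (Finset.Icc 1 (q - 1))).image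
    (fun kl => (kl.1 : ℝ) / p + (kl.2 : ℝ) / q)

/-- Litherland's formula: σ̂(x) = |Σ(p,q) \ (x,x+1)| − |Σ(p,q) ∩ (x,x+1)|. -/
noncomputable def sigHat (p q : ℕ) (x : ℝ) : ℤ :=
  (((sigmaSet p q).filter (fun y => y ∉ Set.Ioo x (x + 1))).card : ℤ)
    - (((sigmaSet p q).filter (fun y => y ∈ Set.Ioo x (x + 1))).card : ℤ)

/-- The sawtooth function ((x)). -/
noncomputable def saw (x : ℝ) : ℝ :=
  if ∃ n : ℤ, x = n then 0 else Int.fract x - 1 / 2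

/-- The Dedekind sum s(a,b). -/
noncomputable def dedekindSum (a b : ℕ) : ℝ :=
  ∑ j ∈ Finset.range b, saw ((j : ℝ) / b) * saw ((a : ℝ) * j / b)

/-- The generalized Dedekind sum s(a,b;x,y). -/
noncomputable def dedekindSumGen (a b : ℕ) (x y : ℝ) : ℝ :=
  ∑ j ∈ Finset.range b, saw (((j : ℝ) + y) / b) * saw ((a : ℝ) * ((j : ℝ) + y) / b + x)

/-- N(p,q;C) = #{(k,l) ∈ ℤ²_{≥0} : k/p + l/q < 1 − C}. -/
noncomputable def Ncount (p q : ℕ) (C : ℝ) : ℕ :=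
  Set.ncard {kl : ℕ × ℕ | (kl.1 : ℝ) / p + (kl.2 : ℝ) / q < 1 - C}

/-- The second Bernoulli polynomial evaluated at the fractional part: Ψ₂(x). -/
noncomputable def psi2 (x : ℝ) : ℝ := Int.fract x ^ 2 - Int.fract x + 1 / 6


lemma gauss1 (n : ℕ) : 2 * ∑ i ∈ Finset.Ico 1 n, (i:ℤ) = n * (n-1) := by
  induction n with
  | zero => simp
  | succ n ih =>
    rcases Nat.eq_zero_or_pos n with h | h
    · subst h; simp
    · rw [Finset.sum_Ico_succ_top (by omega)]
      push_cast
      linear_combination ih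

lemma gauss2 (n : ℕ) : 6 * ∑ i ∈ Finset.Ico 1 n, (i:ℤ)^2 = n * (n-1) * (2*n-1) := by
  induction n with
  | zero => simp
  | succ n ih =>
    rcases Nat.eq_zero_or_pos n with h | h
    · subst h; simp
    · rw [Finset.sum_Ico_succ_top (by omega)]
      push_cast
      linear_combination ih

lemma range_to_Ico (n : ℕ) (hn : 0 < n) (f : ℕ → ℤ) (hf : f 0 = 0) :
    ∑ i ∈ Finset.range n, f i = ∑ i ∈ Finset.Ico 1 n, f i := by
  rw [Finset.range_eq_Ico, Finset.sum_eq_sum_Ico_succ_bot hn, hf, zero_add]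

lemma not_dvd_aux {p q : ℕ} (hpq : Nat.Coprime p q) {k : ℕ} (l : ℕ)
    (hk1 : 1 ≤ k) (hkp : k < p) : ¬ p ∣ (k*q + l*p) := by
  intro h
  have h2 : p ∣ k * q := by
    have := Nat.dvd_sub h (dvd_mul_left p l)
    simpa using this
  have h3 : p ∣ k := hpq.dvd_of_dvd_mul_right h2
  have := Nat.le_of_dvd (by omega) h3
  omega

lemma mod_inj {p q : ℕ} (hpq : Nat.Coprime p q) {k k' l l' : ℕ}
    (hk : k < p) (hk' : k' < p) (hl : l < q) (hl' : l' < q)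
    (h : k*q + l*p ≡ k'*q + l'*p [MOD p*q]) : k = k' ∧ l = l' := by
  have hP : k*q + l*p ≡ k'*q + l'*p [MOD p] := h.of_dvd (dvd_mul_right p q)
  have hQ : k*q + l*p ≡ k'*q + l'*p [MOD q] := h.of_dvd (dvd_mul_left q p)
  have hkk : k = k' := by
    have e1 : k*q ≡ k'*q [MOD p] := by
      have z1 : l*p ≡ 0 [MOD p] := (Nat.modEq_zero_iff_dvd).mpr (dvd_mul_left p l)
      have z2 : l'*p ≡ 0 [MOD p] := (Nat.modEq_zero_iff_dvd).mpr (dvd_mul_left p l')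
      calc k*q ≡ k*q + 0 [MOD p] := by rw [add_zero]
        _ ≡ k*q + l*p [MOD p] := (Nat.ModEq.refl _).add z1.symm
        _ ≡ k'*q + l'*p [MOD p] := hP
        _ ≡ k'*q + 0 [MOD p] := (Nat.ModEq.refl _).add z2
        _ = k'*q := by rw [add_zero]
    have e2 : k ≡ k' [MOD p] := Nat.ModEq.cancel_right_of_coprime hpq e1
    have : k % p = k' % p := e2
    rwa [Nat.mod_eq_of_lt hk, Nat.mod_eq_of_lt hk'] at this
  have hll : l = l' := by
    have e1 : l*p ≡ l'*p [MOD q] := by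
      have z1 : k*q ≡ 0 [MOD q] := (Nat.modEq_zero_iff_dvd).mpr (dvd_mul_left q k)
      have z2 : k'*q ≡ 0 [MOD q] := (Nat.modEq_zero_iff_dvd).mpr (dvd_mul_left q k')
      calc l*p ≡ 0 + l*p [MOD q] := by rw [zero_add]
        _ ≡ k*q + l*p [MOD q] := z1.symm.add (Nat.ModEq.refl _)
        _ ≡ k'*q + l'*p [MOD q] := hQ
        _ ≡ 0 + l'*p [MOD q] := z2.add (Nat.ModEq.refl _)
        _ = l'*p := by rw [zero_add]
    have e2 : l ≡ l' [MOD q] := Nat.ModEq.cancel_right_of_coprime hpq.symm e1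
    have : l % q = l' % q := e2
    rwa [Nat.mod_eq_of_lt hl, Nat.mod_eq_of_lt hl'] at this
  exact ⟨hkk, hll⟩


lemma sum_grid_eq_sum_res (p q : ℕ) (hp : 2 ≤ p) (hq : 2 ≤ q) (hpq : Nat.Coprime p q)
    (φ : ℕ → ℤ) :
    ∑ kl ∈ Finset.Ico 1 p ×ˢ Finset.Ico 1 q, φ ((kl.1*q + kl.2*p) % (p*q))
      = ∑ r ∈ (Finset.range (p*q)).filter (fun r => ¬ p ∣ r ∧ ¬ q ∣ r), φ r := by
  classical
  obtain ⟨q', -, hq'⟩ := Nat.exists_mul_mod_eq_one_of_coprime hpq.symm (by omega)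
  obtain ⟨p', -, hp'⟩ := Nat.exists_mul_mod_eq_one_of_coprime hpq (by omega)
  -- q * q' ≡ 1 [MOD p],  p * p' ≡ 1 [MOD q]
  have hqq' : q * q' ≡ 1 [MOD p] := by
    unfold Nat.ModEq; rw [hq', Nat.mod_eq_of_lt (by omega)]
  have hpp' : p * p' ≡ 1 [MOD q] := by
    unfold Nat.ModEq; rw [hp', Nat.mod_eq_of_lt (by omega)]
  have hcopq' : Nat.Coprime p q' := by
    apply Nat.Coprime.coprime_dvd_right (dvd_mul_left q' q)
    exact Nat.Coprime.symm (Nat.coprime_of_mul_modEq_one 1 (by simpa [one_mul] using hqq'))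
  have hcopp' : Nat.Coprime q p' := by
    apply Nat.Coprime.coprime_dvd_right (dvd_mul_left p' p)
    exact Nat.Coprime.symm (Nat.coprime_of_mul_modEq_one 1 (by simpa [one_mul] using hpp'))
  have hppos : 0 < p := by omega
  have hqpos : 0 < q := by omega
  have hPQ : 0 < p * q := by positivity
  refine Finset.sum_bij' (fun kl _ => (kl.1*q + kl.2*p) % (p*q))
    (fun r _ => ((r*q') % p, (r*p') % q)) ?_ ?_ ?_ ?_ ?_
  · -- maps into residue set
    rintro ⟨k, l⟩ hkl
    simp only [Finset.mem_product, Finset.mem_Ico] at hkl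
    obtain ⟨⟨hk1, hkp⟩, ⟨hl1, hlq⟩⟩ := hkl
    simp only [Finset.mem_filter, Finset.mem_range]
    refine ⟨Nat.mod_lt _ hPQ, ?_, ?_⟩
    · rw [Nat.dvd_mod_iff (dvd_mul_right p q)]
      exact not_dvd_aux hpq l hk1 hkp
    · rw [Nat.dvd_mod_iff (dvd_mul_left q p)]
      rw [add_comm]
      exact not_dvd_aux hpq.symm k hl1 hlq
  · -- inverse maps into grid
    intro r hr
    simp only [Finset.mem_filter, Finset.mem_range] at hr
    obtain ⟨hrlt, hpr, hqr⟩ := hr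
    simp only [Finset.mem_product, Finset.mem_Ico]
    refine ⟨⟨?_, Nat.mod_lt _ hppos⟩, ?_, Nat.mod_lt _ hqpos⟩
    · rcases Nat.eq_zero_or_pos ((r*q') % p) with h0 | h0
      · exfalso
        have : p ∣ r * q' := Nat.dvd_iff_mod_eq_zero.mpr h0
        exact hpr (hcopq'.dvd_of_dvd_mul_right this)
      · omega
    · rcases Nat.eq_zero_or_pos ((r*p') % q) with h0 | h0
      · exfalso
        have : q ∣ r * p' := Nat.dvd_iff_mod_eq_zero.mpr h0
        exact hqr (hcopp'.dvd_of_dvd_mul_right this)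
      · omega
  · -- left inverse
    rintro ⟨k, l⟩ hkl
    simp only [Finset.mem_product, Finset.mem_Ico] at hkl
    obtain ⟨⟨hk1, hkp⟩, ⟨hl1, hlq⟩⟩ := hkl
    have base : (k*q + l*p) % (p*q) ≡ k*q + l*p [MOD p*q] := Nat.mod_modEq _ _
    have e1 : ((k*q + l*p) % (p*q)) * q' ≡ k [MOD p] := by
      calc ((k*q + l*p) % (p*q)) * q'
          ≡ (k*q + l*p) * q' [MOD p] := ((base.of_dvd (dvd_mul_right p q)).mul_right q')
        _ = k*(q*q') + (l*q')*p := by ring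
        _ ≡ k*1 + 0 [MOD p] := (hqq'.mul_left k).add
            ((Nat.modEq_zero_iff_dvd).mpr (dvd_mul_left p (l*q')))
        _ = k := by ring
    have e2 : ((k*q + l*p) % (p*q)) * p' ≡ l [MOD q] := by
      calc ((k*q + l*p) % (p*q)) * p'
          ≡ (k*q + l*p) * p' [MOD q] := ((base.of_dvd (dvd_mul_left q p)).mul_right p')
        _ = l*(p*p') + (k*p')*q := by ring
        _ ≡ l*1 + 0 [MOD q] := (hpp'.mul_left l).add
            ((Nat.modEq_zero_iff_dvd).mpr (dvd_mul_left q (k*p')))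
        _ = l := by ring
    have e1' : ((k*q + l*p) % (p*q)) * q' % p = k := by
      have : ((k*q + l*p) % (p*q)) * q' % p = k % p := e1
      rwa [Nat.mod_eq_of_lt hkp] at this
    have e2' : ((k*q + l*p) % (p*q)) * p' % q = l := by
      have : ((k*q + l*p) % (p*q)) * p' % q = l % q := e2
      rwa [Nat.mod_eq_of_lt hlq] at this
    simp [e1', e2']
  · -- right inverse
    intro r hr
    simp only [Finset.mem_filter, Finset.mem_range] at hr
    obtain ⟨hrlt, hpr, hqr⟩ := hr
    have e1 : (r*q' % p) * q + (r*p' % q) * p ≡ r [MOD p] := by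
      calc (r*q' % p) * q + (r*p' % q) * p
          ≡ (r*q') * q + (r*p' % q) * p [MOD p] := ((Nat.mod_modEq _ _).mul_right q).add
            (Nat.ModEq.refl _)
        _ = r*(q*q') + (r*p' % q)*p := by ring
        _ ≡ r*1 + 0 [MOD p] := (hqq'.mul_left r).add
            ((Nat.modEq_zero_iff_dvd).mpr (dvd_mul_left p _))
        _ = r := by ring
    have e2 : (r*q' % p) * q + (r*p' % q) * p ≡ r [MOD q] := by
      calc (r*q' % p) * q + (r*p' % q) * p
          ≡ (r*q' % p) * q + (r*p') * p [MOD q] := (Nat.ModEq.refl _).add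
            ((Nat.mod_modEq _ _).mul_right p)
        _ = r*(p*p') + (r*q' % p)*q := by ring
        _ ≡ r*1 + 0 [MOD q] := (hpp'.mul_left r).add
            ((Nat.modEq_zero_iff_dvd).mpr (dvd_mul_left q _))
        _ = r := by ring
    have e3 : (r*q' % p) * q + (r*p' % q) * p ≡ r [MOD p*q] :=
      (Nat.modEq_and_modEq_iff_modEq_mul hpq).mp ⟨e1, e2⟩
    have : ((r*q' % p) * q + (r*p' % q) * p) % (p*q) = r % (p*q) := e3
    rw [Nat.mod_eq_of_lt hrlt] at this
    simpa using this
  · intro a ha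
    rfl

lemma sum_res_decomp (p q : ℕ) (hp : 2 ≤ p) (hq : 2 ≤ q) (hpq : Nat.Coprime p q)
    (f : ℕ → ℤ) (hf : f 0 = 0) :
    ∑ r ∈ (Finset.range (p*q)).filter (fun r => ¬ p ∣ r ∧ ¬ q ∣ r), f r
      = ∑ r ∈ Finset.range (p*q), f r
        - ∑ j ∈ Finset.range q, f (p*j) - ∑ j ∈ Finset.range p, f (q*j) := by
  classical
  have hppos : 0 < p := by omega
  have hqpos : 0 < q := by omega
  have h1 : ∑ j ∈ Finset.range q, f (p*j)
      = ∑ r ∈ (Finset.range (p*q)).filter (fun r => p ∣ r), f r := by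
    refine Finset.sum_bij' (fun j _ => p*j) (fun r _ => r / p) ?_ ?_ ?_ ?_ ?_
    · intro j hj
      simp only [Finset.mem_range] at hj
      simp only [Finset.mem_filter, Finset.mem_range]
      exact ⟨by exact (Nat.mul_lt_mul_left hppos).mpr hj, dvd_mul_right p j⟩
    · intro r hr
      simp only [Finset.mem_filter, Finset.mem_range] at hr
      simp only [Finset.mem_range]
      exact Nat.div_lt_of_lt_mul (by omega)
    · intro j hj
      exact Nat.mul_div_cancel_left j hppos
    · intro r hr
      simp only [Finset.mem_filter, Finset.mem_range] at hr
      exact Nat.mul_div_cancel' hr.2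
    · intro j hj; rfl
  have h2 : ∑ j ∈ Finset.range p, f (q*j)
      = ∑ r ∈ (Finset.range (p*q)).filter (fun r => q ∣ r), f r := by
    refine Finset.sum_bij' (fun j _ => q*j) (fun r _ => r / q) ?_ ?_ ?_ ?_ ?_
    · intro j hj
      simp only [Finset.mem_range] at hj
      simp only [Finset.mem_filter, Finset.mem_range]
      refine ⟨?_, dvd_mul_right q j⟩
      rw [mul_comm p q]; exact (Nat.mul_lt_mul_left hqpos).mpr hj
    · intro r hr
      simp only [Finset.mem_filter, Finset.mem_range] at hr
      simp only [Finset.mem_range]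
      exact Nat.div_lt_of_lt_mul (by rw [mul_comm q p]; exact hr.1)
    · intro j hj
      exact Nat.mul_div_cancel_left j hqpos
    · intro r hr
      simp only [Finset.mem_filter, Finset.mem_range] at hr
      exact Nat.mul_div_cancel' hr.2
    · intro j hj; rfl
  have h3 : (Finset.range (p*q)).filter (fun r => p ∣ r ∧ q ∣ r) = {0} := by
    ext r
    simp only [Finset.mem_filter, Finset.mem_range, Finset.mem_singleton]
    constructor
    · rintro ⟨hrlt, hpr, hqr⟩
      have : p * q ∣ r := Nat.Coprime.mul_dvd_of_dvd_of_dvd hpq hpr hqr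
      exact Nat.eq_zero_of_dvd_of_lt this hrlt
    · rintro rfl
      exact ⟨by positivity, dvd_zero p, dvd_zero q⟩
  have key : ∀ r : ℕ, f r = (if ¬ p ∣ r ∧ ¬ q ∣ r then f r else 0)
      + (if p ∣ r then f r else 0) + (if q ∣ r then f r else 0)
      - (if p ∣ r ∧ q ∣ r then f r else 0) := by
    intro r
    by_cases h1 : p ∣ r <;> by_cases h2 : q ∣ r <;> simp [h1, h2]
  have expand : ∑ r ∈ Finset.range (p*q), f r
      = (∑ r ∈ (Finset.range (p*q)).filter (fun r => ¬ p ∣ r ∧ ¬ q ∣ r), f r)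
        + (∑ r ∈ (Finset.range (p*q)).filter (fun r => p ∣ r), f r)
        + (∑ r ∈ (Finset.range (p*q)).filter (fun r => q ∣ r), f r)
        - (∑ r ∈ (Finset.range (p*q)).filter (fun r => p ∣ r ∧ q ∣ r), f r) := by
    rw [Finset.sum_filter, Finset.sum_filter, Finset.sum_filter, Finset.sum_filter,
      ← Finset.sum_add_distrib, ← Finset.sum_add_distrib, ← Finset.sum_sub_distrib]
    exact Finset.sum_congr rfl (fun r _ => key r)
  rw [h3, Finset.sum_singleton, hf] at expand
  rw [h1, h2]
  linarith [expand]


lemma mod_cast_eq (m P : ℕ) (hlt : m < 2*P) (hne : m ≠ P) :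
    ((m % P : ℕ) : ℤ) = (m:ℤ) - (P:ℤ) * (if P < m then (1:ℤ) else 0) := by
  rcases lt_or_ge P m with h | h
  · rw [if_pos h, mul_one, Nat.mod_eq_sub_mod (le_of_lt h), Nat.mod_eq_of_lt (by omega),
      Nat.cast_sub (le_of_lt h)]
  · rw [if_neg (not_lt.mpr h), mul_zero, Nat.mod_eq_of_lt (by omega), sub_zero]

lemma mod_cast_sq (m P : ℕ) (hlt : m < 2*P) (hne : m ≠ P) :
    ((m % P : ℕ) : ℤ)^2
      = (m:ℤ)^2 - 2*(P:ℤ)*((m:ℤ)*(if P < m then (1:ℤ) else 0))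
        + (P:ℤ)^2*(if P < m then (1:ℤ) else 0) := by
  rw [mod_cast_eq m P hlt hne]
  rcases lt_or_ge P m with h | h
  · rw [if_pos h]; ring
  · rw [if_neg (not_lt.mpr h)]; ring

lemma abs_cast_eq (m P : ℕ) (hne : m ≠ P) :
    |(m:ℤ) - (P:ℤ)|
      = 2*((m:ℤ)*(if P < m then (1:ℤ) else 0)) - 2*(P:ℤ)*(if P < m then (1:ℤ) else 0)
        - (m:ℤ) + (P:ℤ) := by
  rcases lt_or_ge P m with h | h
  · have hpos : (0:ℤ) < (m:ℤ) - (P:ℤ) := by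
      have : (P:ℤ) < (m:ℤ) := by exact_mod_cast h
      linarith
    rw [if_pos h, abs_of_pos hpos]; ring
  · have hnp : (m:ℤ) - (P:ℤ) ≤ 0 := by
      have : (m:ℤ) ≤ (P:ℤ) := by exact_mod_cast h
      linarith
    rw [if_neg (not_lt.mpr h), abs_of_nonpos hnp]; ring

lemma grid_bound {p q : ℕ} (hpq : Nat.Coprime p q) {k l : ℕ}
    (hk1 : 1 ≤ k) (hkp : k < p) (hl1 : 1 ≤ l) (hlq : l < q) :
    k*q + l*p < 2*(p*q) ∧ k*q + l*p ≠ p*q := by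
  constructor
  · have a : k*q < p*q := (Nat.mul_lt_mul_right (by omega)).mpr hkp
    have b : l*p < q*p := (Nat.mul_lt_mul_right (by omega)).mpr hlq
    calc k*q + l*p < p*q + q*p := Nat.add_lt_add a b
      _ = 2*(p*q) := by ring
  · intro h
    exact not_dvd_aux hpq l hk1 hkp (h ▸ dvd_mul_right p q)

theorem Uval (p q : ℕ) (hp : 2 ≤ p) (hq : 2 ≤ q) (hpq : Nat.Coprime p q) :
    6 * ∑ kl ∈ Finset.Ico 1 p ×ˢ Finset.Ico 1 q,
        |((kl.1*q + kl.2*p : ℕ) : ℤ) - (p:ℤ)*(q:ℤ)|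
      = 3*(p:ℤ)*(q:ℤ)*((p:ℤ)-1)*((q:ℤ)-1) - ((p:ℤ)^2-1)*((q:ℤ)^2-1) := by
  classical
  have hp1 : (1:ℕ) ≤ p := by omega
  have hq1 : (1:ℕ) ≤ q := by omega
  have hPQpos : 0 < p*q := by positivity
  have hPQcast : ((p*q : ℕ):ℤ) = (p:ℤ)*(q:ℤ) := by push_cast; ring
  have hmem : ∀ kl ∈ Finset.Ico 1 p ×ˢ Finset.Ico 1 q,
      1 ≤ kl.1 ∧ kl.1 < p ∧ 1 ≤ kl.2 ∧ kl.2 < q := by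
    intro kl hkl
    simp only [Finset.mem_product, Finset.mem_Ico] at hkl
    exact ⟨hkl.1.1, hkl.1.2, hkl.2.1, hkl.2.2⟩
  -- abbreviations (syntactic)
  set G := Finset.Ico 1 p ×ˢ Finset.Ico 1 q with hGdef
  set M1 := ∑ kl ∈ G, ((kl.1*q + kl.2*p : ℕ):ℤ) with hM1def
  set M2 := ∑ kl ∈ G, ((kl.1*q + kl.2*p : ℕ):ℤ)^2 with hM2def
  set A := ∑ kl ∈ G, (if p*q < kl.1*q + kl.2*p then (1:ℤ) else 0) with hAdef
  set B := ∑ kl ∈ G, ((kl.1*q + kl.2*p : ℕ):ℤ) * (if p*q < kl.1*q + kl.2*p then (1:ℤ) else 0)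
    with hBdef
  set S1 := ∑ r ∈ (Finset.range (p*q)).filter (fun r => ¬ p ∣ r ∧ ¬ q ∣ r), (r:ℤ) with hS1def
  set S2 := ∑ r ∈ (Finset.range (p*q)).filter (fun r => ¬ p ∣ r ∧ ¬ q ∣ r), (r:ℤ)^2 with hS2def
  -- relation R1
  have hR1 : M1 - ((p:ℤ)*(q:ℤ)) * A = S1 := by
    have e := sum_grid_eq_sum_res p q hp hq hpq (fun r => (r:ℤ))
    rw [hS1def, ← e]
    have e2 : ∑ kl ∈ G, (((kl.1*q + kl.2*p) % (p*q) : ℕ):ℤ)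
        = ∑ kl ∈ G, (((kl.1*q + kl.2*p : ℕ):ℤ)
            - ((p*q : ℕ):ℤ) * (if p*q < kl.1*q + kl.2*p then (1:ℤ) else 0)) := by
      refine Finset.sum_congr rfl (fun kl hkl => ?_)
      obtain ⟨h1, h2, h3, h4⟩ := hmem kl hkl
      obtain ⟨hb1, hb2⟩ := grid_bound hpq h1 h2 h3 h4
      exact mod_cast_eq _ _ hb1 hb2
    rw [e2, Finset.sum_sub_distrib, ← Finset.mul_sum, hPQcast, hM1def, hAdef]
  -- relation R2
  have hR2 : M2 - 2*((p:ℤ)*(q:ℤ))*B + ((p:ℤ)*(q:ℤ))^2*A = S2 := by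
    have e := sum_grid_eq_sum_res p q hp hq hpq (fun r => (r:ℤ)^2)
    rw [hS2def, ← e]
    have e2 : ∑ kl ∈ G, (((kl.1*q + kl.2*p) % (p*q) : ℕ):ℤ)^2
        = ∑ kl ∈ G, (((kl.1*q + kl.2*p : ℕ):ℤ)^2
            - 2*((p*q : ℕ):ℤ)*(((kl.1*q + kl.2*p : ℕ):ℤ)
                * (if p*q < kl.1*q + kl.2*p then (1:ℤ) else 0))
            + ((p*q : ℕ):ℤ)^2 * (if p*q < kl.1*q + kl.2*p then (1:ℤ) else 0)) := by
      refine Finset.sum_congr rfl (fun kl hkl => ?_)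
      obtain ⟨h1, h2, h3, h4⟩ := hmem kl hkl
      obtain ⟨hb1, hb2⟩ := grid_bound hpq h1 h2 h3 h4
      exact mod_cast_sq _ _ hb1 hb2
    rw [e2]
    rw [Finset.sum_add_distrib, Finset.sum_sub_distrib, ← Finset.mul_sum, ← Finset.mul_sum,
      hPQcast, hM2def, hAdef, hBdef]
  -- relation R3
  have hR3 : ∑ kl ∈ G, |((kl.1*q + kl.2*p : ℕ):ℤ) - (p:ℤ)*(q:ℤ)|
      = 2*B - 2*((p:ℤ)*(q:ℤ))*A - M1 + ((p:ℤ)*(q:ℤ))*(((p:ℤ)-1)*((q:ℤ)-1)) := by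
    have e2 : ∑ kl ∈ G, |((kl.1*q + kl.2*p : ℕ):ℤ) - (p:ℤ)*(q:ℤ)|
        = ∑ kl ∈ G, (2*(((kl.1*q + kl.2*p : ℕ):ℤ)
              * (if p*q < kl.1*q + kl.2*p then (1:ℤ) else 0))
            - 2*((p*q : ℕ):ℤ)*(if p*q < kl.1*q + kl.2*p then (1:ℤ) else 0)
            - ((kl.1*q + kl.2*p : ℕ):ℤ) + ((p*q : ℕ):ℤ)) := by
      refine Finset.sum_congr rfl (fun kl hkl => ?_)
      obtain ⟨h1, h2, h3, h4⟩ := hmem kl hkl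
      obtain ⟨hb1, hb2⟩ := grid_bound hpq h1 h2 h3 h4
      rw [← hPQcast]
      exact abs_cast_eq _ _ hb2
    rw [e2]
    have hcard : (G.card : ℤ) = ((p:ℤ)-1)*((q:ℤ)-1) := by
      rw [hGdef, Finset.card_product, Nat.card_Ico, Nat.card_Ico]
      push_cast [Nat.cast_sub hp1, Nat.cast_sub hq1]
      ring
    rw [Finset.sum_add_distrib, Finset.sum_sub_distrib, Finset.sum_sub_distrib,
      ← Finset.mul_sum, ← Finset.mul_sum, Finset.sum_const, nsmul_eq_mul,
      hPQcast, hM1def, hAdef, hBdef, hcard]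
    ring
  -- closed form M1
  have hM1 : 2*M1 = 2*(p:ℤ)*(q:ℤ)*((p:ℤ)-1)*((q:ℤ)-1) := by
    have e : M1 = ((q:ℤ)-1)*(q:ℤ)*(∑ i ∈ Finset.Ico 1 p, (i:ℤ))
        + ((p:ℤ)-1)*(p:ℤ)*(∑ i ∈ Finset.Ico 1 q, (i:ℤ)) := by
      rw [hM1def, hGdef, Finset.sum_product]
      have inner : ∀ k ∈ Finset.Ico 1 p, ∑ l ∈ Finset.Ico 1 q, ((k*q + l*p : ℕ):ℤ)
          = ((q:ℤ)-1)*((k:ℤ)*(q:ℤ)) + (p:ℤ) * ∑ l ∈ Finset.Ico 1 q, (l:ℤ) := by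
        intro k _
        have : ∀ l ∈ Finset.Ico 1 q, ((k*q + l*p : ℕ):ℤ) = (k:ℤ)*(q:ℤ) + (l:ℤ)*(p:ℤ) := by
          intro l _; push_cast; ring
        rw [Finset.sum_congr rfl this, Finset.sum_add_distrib, Finset.sum_const,
          Nat.card_Ico, nsmul_eq_mul, ← Finset.sum_mul, Nat.cast_sub hq1]
        push_cast
        ring
      rw [Finset.sum_congr rfl inner, Finset.sum_add_distrib, Finset.sum_const,
        Nat.card_Ico, nsmul_eq_mul, Nat.cast_sub hp1]
      push_cast
      have pull : ∀ x ∈ Finset.Ico 1 p, ((q:ℤ)-1)*((x:ℤ)*(q:ℤ)) = (((q:ℤ)-1)*(q:ℤ))*(x:ℤ) := by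
        intro x _; ring
      rw [Finset.sum_congr rfl pull, ← Finset.mul_sum]
      ring
    rw [e]
    linear_combination (((q:ℤ)-1)*(q:ℤ))*gauss1 p + (((p:ℤ)-1)*(p:ℤ))*gauss1 q
  -- closed form M2
  have hM2 : 6*M2 = (q:ℤ)^2*((q:ℤ)-1)*(p:ℤ)*((p:ℤ)-1)*(2*(p:ℤ)-1)
      + (p:ℤ)^2*((p:ℤ)-1)*(q:ℤ)*((q:ℤ)-1)*(2*(q:ℤ)-1)
      + 3*(p:ℤ)^2*(q:ℤ)^2*((p:ℤ)-1)*((q:ℤ)-1) := by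
    have e : M2 = (((q:ℤ)-1)*(q:ℤ)^2)*(∑ i ∈ Finset.Ico 1 p, (i:ℤ)^2)
        + (2*(p:ℤ)*(q:ℤ)*(∑ l ∈ Finset.Ico 1 q, (l:ℤ)))*(∑ i ∈ Finset.Ico 1 p, (i:ℤ))
        + (((p:ℤ)-1)*(p:ℤ)^2)*(∑ l ∈ Finset.Ico 1 q, (l:ℤ)^2) := by
      rw [hM2def, hGdef, Finset.sum_product]
      have inner : ∀ k ∈ Finset.Ico 1 p, ∑ l ∈ Finset.Ico 1 q, ((k*q + l*p : ℕ):ℤ)^2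
          = (((q:ℤ)-1)*(q:ℤ)^2)*(k:ℤ)^2
            + (2*(p:ℤ)*(q:ℤ)*(∑ l ∈ Finset.Ico 1 q, (l:ℤ)))*(k:ℤ)
            + (p:ℤ)^2*(∑ l ∈ Finset.Ico 1 q, (l:ℤ)^2) := by
        intro k _
        have pw : ∀ l ∈ Finset.Ico 1 q, ((k*q + l*p : ℕ):ℤ)^2
            = ((k:ℤ)^2*(q:ℤ)^2) + (2*(k:ℤ)*(p:ℤ)*(q:ℤ))*(l:ℤ) + (p:ℤ)^2*(l:ℤ)^2 := by
          intro l _; push_cast; ring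
        rw [Finset.sum_congr rfl pw, Finset.sum_add_distrib, Finset.sum_add_distrib,
          Finset.sum_const, Nat.card_Ico, nsmul_eq_mul, ← Finset.mul_sum, ← Finset.mul_sum,
          Nat.cast_sub hq1]
        push_cast
        ring
      rw [Finset.sum_congr rfl inner, Finset.sum_add_distrib, Finset.sum_add_distrib,
        Finset.sum_const, Nat.card_Ico, nsmul_eq_mul, ← Finset.mul_sum, ← Finset.mul_sum,
        Nat.cast_sub hp1]
      push_cast
      ring
    rw [e]
    linear_combination (((q:ℤ)-1)*(q:ℤ)^2)*gauss2 p + (((p:ℤ)-1)*(p:ℤ)^2)*gauss2 q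
      + (6*(p:ℤ)*(q:ℤ)*(∑ l ∈ Finset.Ico 1 q, (l:ℤ)))*gauss1 p
      + (3*(p:ℤ)^2*(q:ℤ)*((p:ℤ)-1))*gauss1 q
  -- closed form S1
  have gauss1pq : 2 * ∑ i ∈ Finset.Ico 1 (p*q), (i:ℤ) = (p:ℤ)*(q:ℤ)*((p:ℤ)*(q:ℤ)-1) := by
    have := gauss1 (p*q); push_cast at this; linarith
  have gauss2pq : 6 * ∑ i ∈ Finset.Ico 1 (p*q), (i:ℤ)^2
      = (p:ℤ)*(q:ℤ)*((p:ℤ)*(q:ℤ)-1)*(2*(p:ℤ)*(q:ℤ)-1) := by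
    have := gauss2 (p*q); push_cast at this; linarith
  have hS1 : 2*S1 = (p:ℤ)*(q:ℤ)*((p:ℤ)-1)*((q:ℤ)-1) := by
    have d : S1 = ∑ r ∈ Finset.range (p*q), (r:ℤ)
        - ∑ j ∈ Finset.range q, ((p*j : ℕ):ℤ) - ∑ j ∈ Finset.range p, ((q*j : ℕ):ℤ) := by
      rw [hS1def]
      exact sum_res_decomp p q hp hq hpq (fun r => (r:ℤ)) (by simp)
    have r1 : ∑ r ∈ Finset.range (p*q), (r:ℤ) = ∑ r ∈ Finset.Ico 1 (p*q), (r:ℤ) :=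
      range_to_Ico _ hPQpos _ (by simp)
    have r2 : ∑ j ∈ Finset.range q, ((p*j : ℕ):ℤ) = (p:ℤ) * ∑ j ∈ Finset.Ico 1 q, (j:ℤ) := by
      rw [range_to_Ico q (by omega) (fun j => ((p*j : ℕ):ℤ)) (by simp), Finset.mul_sum]
      exact Finset.sum_congr rfl (fun j _ => by push_cast; ring)
    have r3 : ∑ j ∈ Finset.range p, ((q*j : ℕ):ℤ) = (q:ℤ) * ∑ j ∈ Finset.Ico 1 p, (j:ℤ) := by
      rw [range_to_Ico p (by omega) (fun j => ((q*j : ℕ):ℤ)) (by simp), Finset.mul_sum]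
      exact Finset.sum_congr rfl (fun j _ => by push_cast; ring)
    rw [d, r1, r2, r3]
    linear_combination gauss1pq - (p:ℤ)*gauss1 q - (q:ℤ)*gauss1 p
  -- closed form S2
  have hS2 : 6*S2 = (p:ℤ)*(q:ℤ)*((p:ℤ)*(q:ℤ)-1)*(2*(p:ℤ)*(q:ℤ)-1)
      - (p:ℤ)^2*(q:ℤ)*((q:ℤ)-1)*(2*(q:ℤ)-1) - (q:ℤ)^2*(p:ℤ)*((p:ℤ)-1)*(2*(p:ℤ)-1) := by
    have d : S2 = ∑ r ∈ Finset.range (p*q), (r:ℤ)^2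
        - ∑ j ∈ Finset.range q, ((p*j : ℕ):ℤ)^2 - ∑ j ∈ Finset.range p, ((q*j : ℕ):ℤ)^2 := by
      rw [hS2def]
      exact sum_res_decomp p q hp hq hpq (fun r => (r:ℤ)^2) (by simp)
    have r1 : ∑ r ∈ Finset.range (p*q), (r:ℤ)^2 = ∑ r ∈ Finset.Ico 1 (p*q), (r:ℤ)^2 :=
      range_to_Ico _ hPQpos _ (by simp)
    have r2 : ∑ j ∈ Finset.range q, ((p*j : ℕ):ℤ)^2
        = (p:ℤ)^2 * ∑ j ∈ Finset.Ico 1 q, (j:ℤ)^2 := by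
      rw [range_to_Ico q (by omega) (fun j => ((p*j : ℕ):ℤ)^2) (by simp), Finset.mul_sum]
      exact Finset.sum_congr rfl (fun j _ => by push_cast; ring)
    have r3 : ∑ j ∈ Finset.range p, ((q*j : ℕ):ℤ)^2
        = (q:ℤ)^2 * ∑ j ∈ Finset.Ico 1 p, (j:ℤ)^2 := by
      rw [range_to_Ico p (by omega) (fun j => ((q*j : ℕ):ℤ)^2) (by simp), Finset.mul_sum]
      exact Finset.sum_congr rfl (fun j _ => by push_cast; ring)
    rw [d, r1, r2, r3]
    linear_combination gauss2pq - (p:ℤ)^2*gauss2 q - (q:ℤ)^2*gauss2 p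
  -- final assembly
  have hPne : (((p:ℤ)*(q:ℤ))^2 : ℤ) ≠ 0 := by positivity
  refine mul_left_cancel₀ hPne ?_
  linear_combination (6*((p:ℤ)*(q:ℤ))^2)*hR3 - (6*((p:ℤ)*(q:ℤ)))*hR2
    + (6*((p:ℤ)*(q:ℤ))^2)*hR1 - (6*((p:ℤ)*(q:ℤ))^2)*hM1
    + (3*((p:ℤ)*(q:ℤ))^2)*hS1 + ((p:ℤ)*(q:ℤ))*hM2 - ((p:ℤ)*(q:ℤ))*hS2


theorem integral_signature_torus_knot (p q : ℕ) (hp : 2 ≤ p) (hq : 2 ≤ q)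
    (hpq : Nat.Coprime p q) :
    ∫ x in (0:ℝ)..1, (sigHat p q x : ℝ) =
      -(1/3) * ((p : ℝ) - 1/p) * ((q : ℝ) - 1/q) := by
  classical
  have hp0 : (0:ℝ) < (p:ℝ) := by exact_mod_cast (by omega : 0 < p)
  have hq0 : (0:ℝ) < (q:ℝ) := by exact_mod_cast (by omega : 0 < q)
  have hIccp : Finset.Icc 1 (p-1) = Finset.Ico 1 p := by
    rw [← Finset.Ico_add_one_right_eq_Icc]; congr 1; omega
  have hIccq : Finset.Icc 1 (q-1) = Finset.Ico 1 q := by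
    rw [← Finset.Ico_add_one_right_eq_Icc]; congr 1; omega
  have hsigma : sigmaSet p q
      = (Finset.Ico 1 p ×ˢ Finset.Ico 1 q).image
          (fun kl => (kl.1 : ℝ) / p + (kl.2 : ℝ) / q) := by
    rw [sigmaSet, hIccp, hIccq]
  have hmem : ∀ kl ∈ Finset.Ico 1 p ×ˢ Finset.Ico 1 q,
      1 ≤ kl.1 ∧ kl.1 < p ∧ 1 ≤ kl.2 ∧ kl.2 < q := by
    intro kl hkl
    simp only [Finset.mem_product, Finset.mem_Ico] at hkl
    exact ⟨hkl.1.1, hkl.1.2, hkl.2.1, hkl.2.2⟩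
  -- injectivity of the parametrization
  have hinj : ∀ kl ∈ Finset.Ico 1 p ×ˢ Finset.Ico 1 q,
      ∀ kl' ∈ Finset.Ico 1 p ×ˢ Finset.Ico 1 q,
      (kl.1 : ℝ) / p + (kl.2 : ℝ) / q = (kl'.1 : ℝ) / p + (kl'.2 : ℝ) / q → kl = kl' := by
    rintro ⟨k, l⟩ hkl ⟨k', l'⟩ hkl' heq
    obtain ⟨h1, h2, h3, h4⟩ := hmem _ hkl
    obtain ⟨h1', h2', h3', h4'⟩ := hmem _ hkl'
    have hr : (k:ℝ)*q + l*p = (k':ℝ)*q + l'*p := by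
      field_simp at heq
      linarith [heq]
    have hnat : k*q + l*p = k'*q + l'*p := by exact_mod_cast hr
    have hmod : k*q + l*p ≡ k'*q + l'*p [MOD p*q] := by rw [hnat]
    obtain ⟨e1, e2⟩ := mod_inj hpq h2 h2' h4 h4' hmod
    exact Prod.ext e1 e2
  -- range of sigma values
  have hrange : ∀ s ∈ sigmaSet p q, 0 < s ∧ s < 2 := by
    rw [hsigma]
    intro s hs
    simp only [Finset.mem_image] at hs
    obtain ⟨kl, hkl, rfl⟩ := hs
    obtain ⟨h1, h2, h3, h4⟩ := hmem _ hkl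
    have a1 : (0:ℝ) < (kl.1:ℝ)/p := by
      apply div_pos _ hp0; exact_mod_cast (by omega : 0 < kl.1)
    have a2 : (0:ℝ) < (kl.2:ℝ)/q := by
      apply div_pos _ hq0; exact_mod_cast (by omega : 0 < kl.2)
    have b1 : (kl.1:ℝ)/p < 1 := by
      rw [div_lt_one hp0]; exact_mod_cast h2
    have b2 : (kl.2:ℝ)/q < 1 := by
      rw [div_lt_one hq0]; exact_mod_cast h4
    constructor <;> linarith
  -- pointwise formula for sigHat
  have hsig : ∀ x : ℝ, (sigHat p q x : ℝ)
      = ∑ s ∈ sigmaSet p q,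
          (1 - 2 * Set.indicator (Set.Ioo (s-1) s) (fun _ => (1:ℝ)) x) := by
    intro x
    have hsum : ∑ s ∈ sigmaSet p q, Set.indicator (Set.Ioo (s-1) s) (fun _ => (1:ℝ)) x
        = (((sigmaSet p q).filter (fun y => y ∈ Set.Ioo x (x+1))).card : ℝ) := by
      rw [← Finset.sum_boole]
      refine Finset.sum_congr rfl (fun s _ => ?_)
      have hiff : x ∈ Set.Ioo (s-1) s ↔ s ∈ Set.Ioo x (x+1) := by
        simp only [Set.mem_Ioo]
        constructor <;> rintro ⟨a, b⟩ <;> constructor <;> linarith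
      simp [Set.indicator_apply, hiff]
    have hc := Finset.card_filter_add_card_filter_not
      (s := sigmaSet p q) (p := fun y => y ∈ Set.Ioo x (x+1))
    have hc' : (((sigmaSet p q).filter (fun y => y ∈ Set.Ioo x (x+1))).card : ℝ)
        + (((sigmaSet p q).filter (fun y => y ∉ Set.Ioo x (x+1))).card : ℝ)
        = ((sigmaSet p q).card : ℝ) := by exact_mod_cast hc
    rw [Finset.sum_sub_distrib, Finset.sum_const, nsmul_eq_mul, mul_one, ← Finset.mul_sum,
      hsum]
    unfold sigHat
    push_cast
    linarith [hc']
  -- integrability of the indicator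
  have hindint : ∀ s : ℝ, IntervalIntegrable
      (fun x => Set.indicator (Set.Ioo (s-1) s) (fun _ => (1:ℝ)) x)
      MeasureTheory.volume 0 1 := by
    intro s
    apply MeasureTheory.Integrable.intervalIntegrable
    rw [MeasureTheory.integrable_indicator_iff measurableSet_Ioo]
    exact (MeasureTheory.integrableOn_const_iff).mpr (Or.inr measure_Ioo_lt_top)
  -- evaluation of the indicator integral
  have heval : ∀ s : ℝ, 0 < s → s < 2 →
      (∫ x in (0:ℝ)..1, Set.indicator (Set.Ioo (s-1) s) (fun _ => (1:ℝ)) x) = 1 - |s-1| := by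
    intro s h0 h2
    rw [intervalIntegral.integral_of_le zero_le_one,
      MeasureTheory.setIntegral_indicator measurableSet_Ioo,
      MeasureTheory.setIntegral_const]
    rcases le_or_gt s 1 with h | h
    · have hset : Set.Ioc (0:ℝ) 1 ∩ Set.Ioo (s-1) s = Set.Ioo 0 s := by
        ext y
        simp only [Set.mem_inter_iff, Set.mem_Ioc, Set.mem_Ioo]
        constructor
        · rintro ⟨⟨a, b⟩, c, d⟩; exact ⟨a, d⟩
        · rintro ⟨a, b⟩; exact ⟨⟨a, by linarith⟩, by linarith, b⟩
      rw [hset, Real.volume_real_Ioo_of_le (by linarith), smul_eq_mul, mul_one,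
        abs_of_nonpos (by linarith)]
      ring
    · have hset : Set.Ioc (0:ℝ) 1 ∩ Set.Ioo (s-1) s = Set.Ioc (s-1) 1 := by
        ext y
        simp only [Set.mem_inter_iff, Set.mem_Ioc, Set.mem_Ioo]
        constructor
        · rintro ⟨⟨a, b⟩, c, d⟩; exact ⟨c, b⟩
        · rintro ⟨a, b⟩; exact ⟨⟨by linarith, b⟩, a, by linarith⟩
      rw [hset, Real.volume_real_Ioc_of_le (by linarith), smul_eq_mul, mul_one,
        abs_of_nonneg (by linarith)]
  -- combine
  have hmain : ∫ x in (0:ℝ)..1, (sigHat p q x : ℝ)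
      = 2*(∑ s ∈ sigmaSet p q, |s-1|) - ((sigmaSet p q).card : ℝ) := by
    calc ∫ x in (0:ℝ)..1, (sigHat p q x : ℝ)
        = ∫ x in (0:ℝ)..1, ∑ s ∈ sigmaSet p q,
            (1 - 2 * Set.indicator (Set.Ioo (s-1) s) (fun _ => (1:ℝ)) x) := by
          apply intervalIntegral.integral_congr
          intro x _
          exact hsig x
      _ = ∑ s ∈ sigmaSet p q, ∫ x in (0:ℝ)..1,
            (1 - 2 * Set.indicator (Set.Ioo (s-1) s) (fun _ => (1:ℝ)) x) := by
          apply intervalIntegral.integral_finset_sum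
          intro s _
          exact intervalIntegrable_const.sub ((hindint s).const_mul 2)
      _ = ∑ s ∈ sigmaSet p q, (2*|s-1| - 1) := by
          refine Finset.sum_congr rfl (fun s hs => ?_)
          obtain ⟨h0, h2⟩ := hrange s hs
          rw [intervalIntegral.integral_sub intervalIntegrable_const
              ((hindint s).const_mul 2),
            intervalIntegral.integral_const_mul, heval s h0 h2,
            intervalIntegral.integral_const]
          simp only [sub_zero, smul_eq_mul, mul_one]
          ring
      _ = 2*(∑ s ∈ sigmaSet p q, |s-1|) - ((sigmaSet p q).card : ℝ) := by
          rw [Finset.sum_sub_distrib, Finset.sum_const, nsmul_eq_mul, mul_one,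
            ← Finset.mul_sum]
  -- cardinality
  have hcard : ((sigmaSet p q).card : ℝ) = ((p:ℝ)-1)*((q:ℝ)-1) := by
    rw [hsigma, Finset.card_image_of_injOn (fun a ha b hb h => hinj a ha b hb h),
      Finset.card_product, Nat.card_Ico, Nat.card_Ico]
    push_cast [Nat.cast_sub (by omega : 1 ≤ p), Nat.cast_sub (by omega : 1 ≤ q)]
    ring
  -- sum of distances
  have habs : ∑ s ∈ sigmaSet p q, |s-1|
      = (∑ kl ∈ Finset.Ico 1 p ×ˢ Finset.Ico 1 q,
          |(kl.1:ℝ)*(q:ℝ) + (kl.2:ℝ)*(p:ℝ) - (p:ℝ)*(q:ℝ)|) / ((p:ℝ)*(q:ℝ)) := by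
    rw [hsigma, Finset.sum_image hinj, Finset.sum_div]
    refine Finset.sum_congr rfl (fun kl hkl => ?_)
    rw [show (kl.1:ℝ)/p + (kl.2:ℝ)/q - 1
        = ((kl.1:ℝ)*(q:ℝ) + (kl.2:ℝ)*(p:ℝ) - (p:ℝ)*(q:ℝ))/((p:ℝ)*(q:ℝ)) by field_simp]
    rw [abs_div, abs_of_pos (by positivity : (0:ℝ) < (p:ℝ)*(q:ℝ))]
  -- finish with the combinatorial identity
  have hU := Uval p q hp hq hpq
  have hUR : 6 * (∑ kl ∈ Finset.Ico 1 p ×ˢ Finset.Ico 1 q,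
      |(kl.1:ℝ)*(q:ℝ) + (kl.2:ℝ)*(p:ℝ) - (p:ℝ)*(q:ℝ)|)
      = 3*(p:ℝ)*(q:ℝ)*((p:ℝ)-1)*((q:ℝ)-1) - ((p:ℝ)^2-1)*((q:ℝ)^2-1) := by
    have h2 := congrArg (fun z : ℤ => (z:ℝ)) hU
    push_cast at h2
    convert h2 using 2 <;> push_cast <;> ring
  rw [hmain, habs, hcard]
  have hpne : (p:ℝ) ≠ 0 := ne_of_gt hp0
  have hqne : (q:ℝ) ≠ 0 := ne_of_gt hq0
  generalize (∑ kl ∈ Finset.Ico 1 p ×ˢ Finset.Ico 1 q,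
      |(kl.1:ℝ)*(q:ℝ) + (kl.2:ℝ)*(p:ℝ) - (p:ℝ)*(q:ℝ)|) = S at hUR ⊢
  rw [show S = (3*(p:ℝ)*(q:ℝ)*((p:ℝ)-1)*((q:ℝ)-1) - ((p:ℝ)^2-1)*((q:ℝ)^2-1)) / 6 by linarith]
  field_simp
  ring
end

section
/- For coprime integers p, q ≥ 2, ∑_{k=1}^{p−1} ∑_{l=1}^{q−1} min(qk, pl) = ∑_{s=0}^{pq−1} ⌊s/p⌋·⌊s/q⌋. -/
open Finset

lemma count_ge (m n : ℕ) : (∑ s ∈ range n, if m ≤ s then 1 else 0) = n - m := by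
  have h : (range n).filter (fun s => m ≤ s) = Ico m n := by
    ext s; simp [Finset.mem_Ico]; omega
  rw [Finset.sum_boole, h]
  simp

lemma sum_Icc_id_two (n : ℕ) : (∑ k ∈ Finset.Icc 1 n, k) * 2 = n * (n + 1) := by
  induction n with
  | zero => simp
  | succ n ih =>
    rw [Finset.sum_Icc_succ_top (by omega)]
    ring_nf
    ring_nf at ih
    omega

lemma div_as_sum (p q s : ℕ) (hp : 0 < p) (hs : s < p * q) :
    s / p = ∑ k ∈ Finset.Icc 1 (q - 1), if p * k ≤ s then 1 else 0 := by
  rw [Finset.sum_boole]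
  have h1 : (Finset.Icc 1 (q-1)).filter (fun k => p * k ≤ s) = Finset.Icc 1 (s / p) := by
    ext k
    have hd : s / p < q := by
      rw [Nat.div_lt_iff_lt_mul hp, mul_comm q p]; exact hs
    simp only [Finset.mem_filter, Finset.mem_Icc]
    have hiff : p * k ≤ s ↔ k ≤ s / p := by
      rw [Nat.le_div_iff_mul_le hp, mul_comm]
    rw [hiff]
    omega
  rw [h1]
  simp

theorem sum_min_eq_sum_floor (p q : ℕ) (hp : 2 ≤ p) (hq : 2 ≤ q)
    (hpq : Nat.Coprime p q) :
    ∑ k ∈ Finset.Icc 1 (p - 1), ∑ l ∈ Finset.Icc 1 (q - 1), min (q * k) (p * l)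
      = ∑ s ∈ Finset.range (p * q), (s / p) * (s / q) := by
  have hp0 : 0 < p := by omega
  have hq0 : 0 < q := by omega
  -- Step 1: rewrite RHS as sum of (p*q - max)
  have step1 : ∑ s ∈ Finset.range (p * q), (s / p) * (s / q)
      = ∑ k ∈ Finset.Icc 1 (q - 1), ∑ l ∈ Finset.Icc 1 (p - 1),
          (p * q - max (p * k) (q * l)) := by
    have h1 : ∀ s ∈ Finset.range (p * q), (s / p) * (s / q)
        = ∑ k ∈ Finset.Icc 1 (q - 1), ∑ l ∈ Finset.Icc 1 (p - 1),
            (if max (p * k) (q * l) ≤ s then 1 else 0) := by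
      intro s hs
      rw [Finset.mem_range] at hs
      rw [div_as_sum p q s hp0 hs, div_as_sum q p s hq0 (by rw [mul_comm]; exact hs)]
      rw [Finset.sum_mul_sum]
      refine Finset.sum_congr rfl fun k _ => Finset.sum_congr rfl fun l _ => ?_
      rw [ite_zero_mul_ite_zero]
      congr 1
      simp [max_le_iff]
    rw [Finset.sum_congr rfl h1, Finset.sum_comm]
    refine Finset.sum_congr rfl fun k _ => ?_
    rw [Finset.sum_comm]
    refine Finset.sum_congr rfl fun l _ => ?_
    rw [count_ge]
  rw [step1]
  -- Step 2: reorient LHS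
  rw [Finset.sum_comm]
  have hmin : (∑ y ∈ Finset.Icc 1 (q-1), ∑ x ∈ Finset.Icc 1 (p-1), min (q * x) (p * y))
      = ∑ k ∈ Finset.Icc 1 (q-1), ∑ l ∈ Finset.Icc 1 (p-1), min (p * k) (q * l) := by
    refine Finset.sum_congr rfl fun k _ => Finset.sum_congr rfl fun l _ => ?_
    rw [min_comm, mul_comm q l, mul_comm p k]
  rw [hmin]
  -- Step 3: arithmetic. Add ∑∑ max to both sides.
  have hmaxle : ∀ k ∈ Finset.Icc 1 (q-1), ∀ l ∈ Finset.Icc 1 (p-1),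
      max (p * k) (q * l) ≤ p * q := by
    intro k hk l hl
    simp only [Finset.mem_Icc] at hk hl
    refine max_le ?_ ?_
    · exact Nat.mul_le_mul_left p (by omega)
    · rw [mul_comm p q]; exact Nat.mul_le_mul_left q (by omega)
  have harith : ∑ k ∈ Finset.Icc 1 (q-1), ∑ l ∈ Finset.Icc 1 (p-1), (p * k + q * l)
      = ∑ k ∈ Finset.Icc 1 (q-1), ∑ l ∈ Finset.Icc 1 (p-1), (p * q) := by
    set A := ∑ l ∈ Finset.Icc 1 (p-1), l with hAdef
    set B := ∑ k ∈ Finset.Icc 1 (q-1), k with hBdef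
    have hA : A * 2 = (p-1) * p := by
      have := sum_Icc_id_two (p-1)
      rw [← hAdef] at this
      have hpp : p - 1 + 1 = p := by omega
      rw [hpp] at this; exact this
    have hB : B * 2 = (q-1) * q := by
      have := sum_Icc_id_two (q-1)
      rw [← hBdef] at this
      have hqq : q - 1 + 1 = q := by omega
      rw [hqq] at this; exact this
    have hL : ∑ k ∈ Finset.Icc 1 (q-1), ∑ l ∈ Finset.Icc 1 (p-1), (p * k + q * l)
        = (p-1) * p * B + (q-1) * (q * A) := by
      have hinner : ∀ k, ∑ l ∈ Finset.Icc 1 (p-1), (p * k + q * l)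
          = (p-1) * (p * k) + q * A := by
        intro k
        rw [Finset.sum_add_distrib, Finset.sum_const, Nat.card_Icc, ← Finset.mul_sum, ← hAdef]
        simp [Nat.smul_one_eq_cast]
      simp only [hinner]
      have hstep : ∀ k, (p-1) * (p * k) + q * A = ((p-1) * p) * k + q * A := fun k => by ring
      simp only [hstep]
      rw [Finset.sum_add_distrib, ← Finset.mul_sum, ← hBdef, Finset.sum_const, Nat.card_Icc]
      have hc : q - 1 + 1 - 1 = q - 1 := by omega
      rw [hc]
      simp [smul_eq_mul]
    have hR : ∑ k ∈ Finset.Icc 1 (q-1), ∑ l ∈ Finset.Icc 1 (p-1), (p * q)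
        = (q-1) * ((p-1) * (p * q)) := by
      rw [Finset.sum_const, Nat.card_Icc, Finset.sum_const, Nat.card_Icc]
      simp [mul_comm, mul_assoc]
    rw [hL, hR]
    have key : ((p-1) * p * B + (q-1) * (q * A)) * 2 = ((q-1) * ((p-1) * (p * q))) * 2 := by
      calc ((p-1) * p * B + (q-1) * (q * A)) * 2
          = (p-1) * p * (B * 2) + (q-1) * q * (A * 2) := by ring
        _ = (p-1) * p * ((q-1) * q) + (q-1) * q * ((p-1) * p) := by rw [hA, hB]
        _ = ((q-1) * ((p-1) * (p * q))) * 2 := by ring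
    omega
  have h2 : ∑ k ∈ Finset.Icc 1 (q-1), ∑ l ∈ Finset.Icc 1 (p-1),
        (min (p * k) (q * l) + max (p * k) (q * l))
      = ∑ k ∈ Finset.Icc 1 (q-1), ∑ l ∈ Finset.Icc 1 (p-1),
        ((p * q - max (p * k) (q * l)) + max (p * k) (q * l)) := by
    have e1 : ∑ k ∈ Finset.Icc 1 (q-1), ∑ l ∈ Finset.Icc 1 (p-1),
        (min (p * k) (q * l) + max (p * k) (q * l))
        = ∑ k ∈ Finset.Icc 1 (q-1), ∑ l ∈ Finset.Icc 1 (p-1), (p * k + q * l) :=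
      Finset.sum_congr rfl fun k _ => Finset.sum_congr rfl fun l _ => min_add_max _ _
    have e2 : ∑ k ∈ Finset.Icc 1 (q-1), ∑ l ∈ Finset.Icc 1 (p-1),
        ((p * q - max (p * k) (q * l)) + max (p * k) (q * l))
        = ∑ k ∈ Finset.Icc 1 (q-1), ∑ l ∈ Finset.Icc 1 (p-1), (p * q) :=
      Finset.sum_congr rfl fun k hk => Finset.sum_congr rfl fun l hl =>
        Nat.sub_add_cancel (hmaxle k hk l hl)
    rw [e1, e2, harith]
  simp only [Finset.sum_add_distrib] at h2
  omega
end

section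
/- For coprime integers p, q ≥ 2, ∑_{s=0}^{pq−1} ⌊s/p⌋·⌊s/q⌋ = (1/3)p²q² + (1/4)pq − (1/4)p²q − (1/4)pq² − (1/12)p² − (1/12)q² + 1/12. -/
open Finset

lemma sum_range_mul_split (a b : ℕ) (f : ℕ → ℚ) :
    ∑ s ∈ range (a * b), f s = ∑ k ∈ range b, ∑ r ∈ range a, f (k * a + r) := by
  induction b with
  | zero => simp
  | succ n ih =>
      rw [Nat.mul_succ, Finset.sum_range_add, ih, Finset.sum_range_succ]
      congr 1
      apply Finset.sum_congr rfl
      intro r _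
      congr 1
      ring

lemma sum_id_q (n : ℕ) : ∑ i ∈ range n, (i : ℚ) = n * (n - 1) / 2 := by
  induction n with
  | zero => simp
  | succ m ih => rw [Finset.sum_range_succ, ih]; push_cast; ring

lemma sum_sq_q (n : ℕ) : ∑ i ∈ range n, (i : ℚ)^2 = n * (n - 1) * (2 * n - 1) / 6 := by
  induction n with
  | zero => simp
  | succ m ih => rw [Finset.sum_range_succ, ih]; push_cast; ring

lemma mod_perm_sum (p q r : ℕ) (hq : 0 < q) (hpq : Nat.Coprime p q) :
    ∑ k ∈ range q, (((k * p + r) % q : ℕ) : ℚ) = ∑ j ∈ range q, (j : ℚ) := by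
  have hinj : ∀ x ∈ range q, ∀ y ∈ range q,
      (x * p + r) % q = (y * p + r) % q → x = y := by
    intro x hx y hy h
    simp only [Finset.mem_range] at hx hy
    have h1 : x * p + r ≡ y * p + r [MOD q] := h
    have h2 : x * p ≡ y * p [MOD q] := h1.add_right_cancel' r
    have h3 : x ≡ y [MOD q] := Nat.ModEq.cancel_right_of_coprime hpq.symm h2
    have := h3
    unfold Nat.ModEq at this
    rwa [Nat.mod_eq_of_lt hx, Nat.mod_eq_of_lt hy] at this
  have himg : (range q).image (fun k => (k * p + r) % q) = range q := by
    apply Finset.eq_of_subset_of_card_le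
    · intro j hj
      simp only [Finset.mem_image] at hj
      obtain ⟨k, _, rfl⟩ := hj
      exact Finset.mem_range.2 (Nat.mod_lt _ hq)
    · rw [Finset.card_image_of_injOn (fun x hx y hy => hinj x hx y hy)]
  calc ∑ k ∈ range q, (((k * p + r) % q : ℕ) : ℚ)
      = ∑ j ∈ (range q).image (fun k => (k * p + r) % q), (j : ℚ) :=
        (Finset.sum_image hinj).symm
    _ = ∑ j ∈ range q, (j : ℚ) := by rw [himg]

lemma sum_self_mod (a b : ℕ) (ha : 0 < a) :
    ∑ s ∈ range (a*b), (s:ℚ)*((s % a : ℕ):ℚ)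
      = (a:ℚ) * (b * (b-1)/2) * (a * (a-1)/2) + b * (a * (a-1) * (2*a-1)/6) := by
  rw [sum_range_mul_split]
  have hinner : ∀ k ∈ range b, ∑ r ∈ range a, (((k*a+r):ℕ):ℚ)*((((k*a+r) % a : ℕ)):ℚ)
      = (a:ℚ)*(k:ℚ)*((a:ℚ)*(a-1)/2) + (a*(a-1)*(2*a-1)/6) := by
    intro k _
    have hterm : ∀ r ∈ range a, (((k*a+r):ℕ):ℚ)*((((k*a+r) % a : ℕ)):ℚ)
        = (a:ℚ)*(k:ℚ)*(r:ℚ) + (r:ℚ)^2 := by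
      intro r hr
      have hmod : (k*a + r) % a = r := by
        rw [Nat.add_comm, Nat.add_mul_mod_self_right, Nat.mod_eq_of_lt (Finset.mem_range.1 hr)]
      rw [hmod]
      push_cast
      ring
    rw [Finset.sum_congr rfl hterm, Finset.sum_add_distrib, ← Finset.mul_sum,
      sum_id_q, sum_sq_q]
  rw [Finset.sum_congr rfl hinner, Finset.sum_add_distrib, Finset.sum_const,
    Finset.card_range]
  have : ∑ k ∈ range b, (a:ℚ)*(k:ℚ)*((a:ℚ)*(a-1)/2)
      = ((a:ℚ)*((a:ℚ)*(a-1)/2)) * ∑ k ∈ range b, (k:ℚ) := by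
    rw [Finset.mul_sum]; apply Finset.sum_congr rfl; intro k _; ring
  rw [this, sum_id_q]
  push_cast
  ring

theorem sum_floor_prod_formula (p q : ℕ) (hp : 2 ≤ p) (hq : 2 ≤ q)
    (hpq : Nat.Coprime p q) :
    ∑ s ∈ Finset.range (p * q), ((⌊(s : ℚ)/p⌋ : ℚ) * (⌊(s : ℚ)/q⌋ : ℚ))
      = (1/3) * p^2 * q^2 + (1/4) * p * q - (1/4) * p^2 * q - (1/4) * p * q^2
        - (1/12) * p^2 - (1/12) * q^2 + 1/12 := by
  have hp0 : (0:ℚ) < p := by positivity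
  have hq0 : (0:ℚ) < q := by positivity
  have hpn : 0 < p := by omega
  have hqn : 0 < q := by omega
  have hfloor : ∀ (s n : ℕ), 0 < n → (⌊(s : ℚ)/n⌋ : ℚ) = ((s : ℚ) - ((s % n : ℕ) : ℚ)) / n := by
    intro s n hn
    have h1 : (0:ℚ) ≤ (s : ℚ)/n := by positivity
    rw [← natCast_floor_eq_intCast_floor h1, Nat.floor_div_natCast, Nat.floor_natCast]
    have h2 : (n : ℚ) * ((s / n : ℕ) : ℚ) + ((s % n : ℕ) : ℚ) = (s : ℚ) := by
      rw [← Nat.cast_mul, ← Nat.cast_add, Nat.div_add_mod]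
    have hn0 : (n:ℚ) ≠ 0 := by positivity
    field_simp
    linarith
  have hrw : ∀ s ∈ range (p * q), ((⌊(s : ℚ)/p⌋ : ℚ) * (⌊(s : ℚ)/q⌋ : ℚ))
      = (1/((p:ℚ)*q)) * (((s:ℚ)^2) - (s:ℚ)*((s % q : ℕ):ℚ) - (s:ℚ)*((s % p : ℕ):ℚ)
          + ((s % p : ℕ):ℚ)*((s % q : ℕ):ℚ)) := by
    intro s _
    rw [hfloor s p hpn, hfloor s q hqn]
    field_simp
    ring
  rw [Finset.sum_congr rfl hrw, ← Finset.mul_sum]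
  have hsplit : ∑ s ∈ range (p * q), (((s:ℚ)^2) - (s:ℚ)*((s % q : ℕ):ℚ) - (s:ℚ)*((s % p : ℕ):ℚ)
          + ((s % p : ℕ):ℚ)*((s % q : ℕ):ℚ))
      = (∑ s ∈ range (p*q), (s:ℚ)^2)
        - (∑ s ∈ range (p*q), (s:ℚ)*((s % q : ℕ):ℚ))
        - (∑ s ∈ range (p*q), (s:ℚ)*((s % p : ℕ):ℚ))
        + (∑ s ∈ range (p*q), ((s % p : ℕ):ℚ)*((s % q : ℕ):ℚ)) := by
    rw [Finset.sum_add_distrib, Finset.sum_sub_distrib, Finset.sum_sub_distrib]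
  rw [hsplit]
  have hA : ∑ s ∈ range (p*q), (s:ℚ)^2
      = ((p:ℚ)*q) * ((p:ℚ)*q - 1) * (2*((p:ℚ)*q) - 1) / 6 := by
    rw [sum_sq_q]; push_cast; ring
  have hBp : ∑ s ∈ range (p*q), (s:ℚ)*((s % p : ℕ):ℚ)
      = (p:ℚ) * ((q:ℚ) * ((q:ℚ)-1)/2) * ((p:ℚ) * ((p:ℚ)-1)/2)
        + (q:ℚ) * ((p:ℚ) * ((p:ℚ)-1) * (2*(p:ℚ)-1)/6) := sum_self_mod p q hpn
  have hBq : ∑ s ∈ range (p*q), (s:ℚ)*((s % q : ℕ):ℚ)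
      = (q:ℚ) * ((p:ℚ) * ((p:ℚ)-1)/2) * ((q:ℚ) * ((q:ℚ)-1)/2)
        + (p:ℚ) * ((q:ℚ) * ((q:ℚ)-1) * (2*(q:ℚ)-1)/6) := by
    rw [Nat.mul_comm p q]
    exact sum_self_mod q p hqn
  have hD : ∑ s ∈ range (p*q), ((s % p : ℕ):ℚ)*((s % q : ℕ):ℚ)
      = ((p:ℚ) * ((p:ℚ)-1)/2) * ((q:ℚ) * ((q:ℚ)-1)/2) := by
    rw [sum_range_mul_split]
    have hinner : ∀ k ∈ range q, ∑ r ∈ range p, ((((k*p+r) % p : ℕ)):ℚ)*((((k*p+r) % q : ℕ)):ℚ)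
        = ∑ r ∈ range p, (r:ℚ)*((((k*p+r) % q : ℕ)):ℚ) := by
      intro k _
      apply Finset.sum_congr rfl
      intro r hr
      have hmod : (k*p + r) % p = r := by
        rw [Nat.add_comm, Nat.add_mul_mod_self_right, Nat.mod_eq_of_lt (Finset.mem_range.1 hr)]
      rw [hmod]
    rw [Finset.sum_congr rfl hinner, Finset.sum_comm]
    have houter : ∀ r ∈ range p, ∑ k ∈ range q, (r:ℚ)*((((k*p+r) % q : ℕ)):ℚ)
        = (r:ℚ) * ((q:ℚ) * ((q:ℚ)-1)/2) := by
      intro r _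
      rw [← Finset.mul_sum, mod_perm_sum p q r hqn hpq, sum_id_q]
    rw [Finset.sum_congr rfl houter, ← Finset.sum_mul, sum_id_q]
  rw [hA, hBp, hBq, hD]
  have hpq0 : (p:ℚ)*q ≠ 0 := by positivity
  field_simp
  ring
end

section
/- If p and q are coprime positive integers and q is even, then N(p,q;1/2) = pq/8 + (p+q)/4 − s(2p,q) + 2s(p,q). -/
open scoped Classical

lemma saw_intCast (n : ℤ) : saw (n : ℝ) = 0 := by
  unfold saw; rw [if_pos ⟨n, rfl⟩]

lemma saw_zero : saw 0 = 0 := by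
  simpa using saw_intCast 0

lemma saw_eq_of_not {x : ℝ} (h : ¬ ∃ n : ℤ, x = n) : saw x = Int.fract x - 1/2 :=
  if_neg h

lemma saw_add_int (x : ℝ) (n : ℤ) : saw (x + n) = saw x := by
  unfold saw
  have h : (∃ m : ℤ, x + n = m) ↔ (∃ m : ℤ, x = m) := by
    constructor
    · rintro ⟨m, hm⟩; exact ⟨m - n, by push_cast; linarith⟩
    · rintro ⟨m, hm⟩; exact ⟨m + n, by push_cast; linarith⟩
  rw [Int.fract_add_intCast]
  by_cases hx : ∃ m : ℤ, x = m
  · rw [if_pos (h.mpr hx), if_pos hx]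
  · rw [if_neg (fun hc => hx (h.mp hc)), if_neg hx]

lemma saw_fract (x : ℝ) : saw (Int.fract x) = saw x := by
  have : x = Int.fract x + (⌊x⌋ : ℤ) := by
    rw [Int.fract]; ring
  conv_rhs => rw [this]
  rw [saw_add_int]

lemma saw_ne_int {x : ℝ} (h : ¬ ∃ n : ℤ, x = n) : Int.fract x ≠ 0 := by
  intro h0
  apply h
  refine ⟨⌊x⌋, ?_⟩
  have := Int.fract_add_floor x
  rw [h0] at this; linarith

lemma saw_neg (x : ℝ) : saw (-x) = - saw x := by
  by_cases hx : ∃ n : ℤ, x = n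
  · obtain ⟨n, rfl⟩ := hx
    rw [saw_intCast]
    rw [show -(n:ℝ) = ((-n : ℤ) : ℝ) by push_cast; ring, saw_intCast]
    ring
  · have hx' : ¬ ∃ n : ℤ, -x = n := by
      rintro ⟨n, hn⟩; exact hx ⟨-n, by push_cast; linarith⟩
    rw [saw_eq_of_not hx', saw_eq_of_not hx,
      Int.fract_neg (saw_ne_int hx)]
    ring

lemma saw_of_mem_Ioo {x : ℝ} (h0 : 0 < x) (h1 : x < 1) : saw x = x - 1/2 := by
  have hni : ¬ ∃ n : ℤ, x = n := by
    rintro ⟨n, rfl⟩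
    have h0' : (0:ℤ) < n := by exact_mod_cast h0
    have h1' : n < (1:ℤ) := by exact_mod_cast h1
    omega
  rw [saw_eq_of_not hni, Int.fract_eq_self.mpr ⟨le_of_lt h0, h1⟩]

lemma saw_half : saw (1/2 : ℝ) = 0 := by
  rw [saw_of_mem_Ioo (by norm_num) (by norm_num)]; norm_num

lemma saw_doubling (x : ℝ) : saw x + saw (x + 1/2) = saw (2*x) := by
  have key : ∀ f : ℝ, 0 ≤ f → f < 1 → saw f + saw (f + 1/2) = saw (2*f) := by
    intro f hf0 hf1
    rcases eq_or_lt_of_le hf0 with hf0 | hf0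
    · rw [← hf0]; norm_num [saw_zero, saw_half]
    rcases lt_trichotomy f (1/2) with hhalf | hhalf | hhalf
    · rw [saw_of_mem_Ioo hf0 hf1, saw_of_mem_Ioo (by linarith) (by linarith),
        saw_of_mem_Ioo (by linarith) (by linarith)]
      ring
    · subst hhalf
      rw [saw_half, show (1/2 : ℝ) + 1/2 = ((1:ℤ):ℝ) by norm_num,
        show 2*(1/2 : ℝ) = ((1:ℤ):ℝ) by norm_num, saw_intCast]
      ring
    · have e1 : f + 1/2 = (f - 1/2) + ((1:ℤ):ℝ) := by push_cast; ring
      have e2 : 2*f = (2*f - 1) + ((1:ℤ):ℝ) := by push_cast; ring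
      rw [saw_of_mem_Ioo hf0 hf1, e1, saw_add_int,
        saw_of_mem_Ioo (by linarith) (by linarith), e2, saw_add_int,
        saw_of_mem_Ioo (by linarith) (by linarith)]
      ring
  have hx : x = Int.fract x + (⌊x⌋ : ℤ) := by rw [Int.fract]; ring
  have h1 : saw x = saw (Int.fract x) := (saw_fract x).symm
  have h2 : saw (x + 1/2) = saw (Int.fract x + 1/2) := by
    conv_lhs => rw [hx]
    rw [show Int.fract x + (⌊x⌋:ℤ) + 1/2 = (Int.fract x + 1/2) + (⌊x⌋:ℤ) by ring,
      saw_add_int]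
  have h3 : saw (2*x) = saw (2*Int.fract x) := by
    conv_lhs => rw [hx]
    rw [show 2*(Int.fract x + (⌊x⌋:ℤ)) = (2*Int.fract x) + ((2*⌊x⌋ : ℤ):ℝ) by push_cast; ring,
      saw_add_int]
  rw [h1, h2, h3]
  exact key _ (Int.fract_nonneg x) (Int.fract_lt_one x)

/-- For any a, the full-period sawtooth sum vanishes. -/
lemma sum_saw_zero (a q : ℕ) : ∑ l ∈ Finset.range q, saw ((a:ℝ)*l/q) = 0 := by
  rcases Nat.eq_zero_or_pos q with hq | hq
  · simp [hq]
  obtain ⟨n, rfl⟩ : ∃ n, q = n + 1 := ⟨q - 1, by omega⟩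
  rw [Finset.sum_range_succ']
  have h0 : saw ((a:ℝ)*(0:ℕ)/(n+1:ℕ)) = 0 := by
    norm_num [saw_zero]
  rw [h0, add_zero]
  set f : ℕ → ℝ := fun i => saw ((a:ℝ)*(i+1:ℕ)/(n+1:ℕ)) with hf
  have hrefl : ∑ j ∈ Finset.range n, f (n - 1 - j) = ∑ j ∈ Finset.range n, f j :=
    Finset.sum_range_reflect f n
  have hneg : ∀ j ∈ Finset.range n, f (n - 1 - j) = - f j := by
    intro j hj
    rw [Finset.mem_range] at hj
    have h1 : n - 1 - j + 1 = n - j := by omega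
    have h2 : ((n - j : ℕ) : ℝ) = (n:ℝ) - j := by
      have : j ≤ n := le_of_lt hj
      push_cast [this]; ring
    rw [hf]
    simp only [h1]
    have key : (a:ℝ)*((n - j:ℕ):ℝ)/((n+1:ℕ):ℝ)
        = -((a:ℝ)*((j+1:ℕ):ℝ)/((n+1:ℕ):ℝ)) + ((a:ℤ):ℝ) := by
      rw [h2]
      have hq0 : ((n+1:ℕ):ℝ) ≠ 0 := by positivity
      field_simp
      push_cast
      ring
    rw [key, saw_add_int, saw_neg]
  rw [Finset.sum_congr rfl hneg, Finset.sum_neg_distrib] at hrefl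
  linarith

section Main
variable (p r : ℕ)

/-- abbreviations -/
lemma sum_saw_add_half (hp : Odd p) (hr : 1 ≤ r) :
    (∑ l ∈ Finset.range r, saw ((p:ℝ)*l/(2*r:ℕ) + 1/2))
      = - ∑ l ∈ Finset.range r, saw ((p:ℝ)*l/(2*r:ℕ)) := by
  obtain ⟨m, hm⟩ := hp
  have hq0 : ((2*r:ℕ):ℝ) ≠ 0 := by positivity
  -- full sum is zero
  have hfull : ∑ l ∈ Finset.range (2*r), saw ((p:ℝ)*l/(2*r:ℕ) + 1/2) = 0 := by
    have hpt : ∀ l ∈ Finset.range (2*r), saw ((p:ℝ)*l/(2*r:ℕ) + 1/2)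
        = saw (((2*p:ℕ):ℝ)*l/(2*r:ℕ)) - saw ((p:ℝ)*l/(2*r:ℕ)) := by
      intro l _
      have hd := saw_doubling ((p:ℝ)*l/(2*r:ℕ))
      have : 2*((p:ℝ)*l/(2*r:ℕ)) = ((2*p:ℕ):ℝ)*l/(2*r:ℕ) := by
        push_cast; ring
      rw [this] at hd
      linarith
    rw [Finset.sum_congr rfl hpt, Finset.sum_sub_distrib, sum_saw_zero, sum_saw_zero]
    ring
  -- split the full sum
  have hsplit : ∑ l ∈ Finset.range (2*r), saw ((p:ℝ)*l/(2*r:ℕ) + 1/2)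
      = (∑ l ∈ Finset.range r, saw ((p:ℝ)*l/(2*r:ℕ) + 1/2))
        + ∑ l ∈ Finset.range r, saw ((p:ℝ)*l/(2*r:ℕ)) := by
    rw [← Finset.sum_range_add_sum_Ico _ (show r ≤ 2*r by omega)]
    congr 1
    rw [Finset.sum_Ico_eq_sum_range]
    have h2r : 2*r - r = r := by omega
    rw [h2r]
    apply Finset.sum_congr rfl
    intro i _
    have key : (p:ℝ)*((r + i:ℕ):ℝ)/((2*r:ℕ):ℝ) + 1/2
        = (p:ℝ)*(i:ℕ)/((2*r:ℕ):ℝ) + ((m+1:ℤ):ℝ) := by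
      have hr0 : (r:ℝ) ≠ 0 := by
        have : 0 < r := hr
        positivity
      field_simp
      push_cast [hm]
      ring
    rw [key, saw_add_int]
  rw [hsplit] at hfull
  linarith

end Main

lemma dedekind_identity (p r : ℕ) (hp : Odd p) (hr : 1 ≤ r) :
    dedekindSum (2*p) (2*r) - 2 * dedekindSum p (2*r)
      = ∑ l ∈ Finset.range r, saw ((p:ℝ)*l/(2*r:ℕ)) := by
  obtain ⟨m, hm⟩ := hp
  have hr0 : (0:ℝ) < (r:ℝ) := by exact_mod_cast hr
  have hq0 : ((2*r:ℕ):ℝ) ≠ 0 := by positivity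
  set T : ℝ := ∑ l ∈ Finset.range r, saw ((p:ℝ)*l/(2*r:ℕ)) with hT
  set f : ℕ → ℝ := fun j => saw ((p:ℝ)*j/(2*r:ℕ)) with hf
  set g : ℕ → ℝ := fun j => saw ((p:ℝ)*j/(2*r:ℕ) + 1/2) with hg
  -- shift identities
  have hgshift : ∀ i : ℕ, g (r + i) = f i := by
    intro i
    have key : (p:ℝ)*((r + i:ℕ):ℝ)/((2*r:ℕ):ℝ) + 1/2
        = (p:ℝ)*(i:ℕ)/((2*r:ℕ):ℝ) + ((m+1:ℤ):ℝ) := by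
      field_simp
      push_cast [hm]
      ring
    rw [hg, hf]
    simp only [key, saw_add_int]
  have hfshift : ∀ i : ℕ, f (r + i) = g i := by
    intro i
    have key : (p:ℝ)*((r + i:ℕ):ℝ)/((2*r:ℕ):ℝ)
        = ((p:ℝ)*(i:ℕ)/((2*r:ℕ):ℝ) + 1/2) + ((m:ℤ):ℝ) := by
      field_simp
      push_cast [hm]
      ring
    rw [hg, hf]
    simp only [key, saw_add_int]
  have harg1 : ∀ i : ℕ, ((r + i:ℕ):ℝ)/((2*r:ℕ):ℝ) = (i:ℝ)/((2*r:ℕ):ℝ) + 1/2 := by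
    intro i; field_simp; push_cast; ring
  have harg2 : ∀ i : ℕ, ((r + i:ℕ):ℝ)/((2*r:ℕ):ℝ) + 1/2
      = (i:ℝ)/((2*r:ℕ):ℝ) + ((1:ℤ):ℝ) := by
    intro i; field_simp; push_cast; ring
  -- U = V
  set U : ℝ := ∑ j ∈ Finset.range (2*r), saw ((j:ℝ)/(2*r:ℕ)) * g j with hU
  set V : ℝ := ∑ j ∈ Finset.range (2*r), saw ((j:ℝ)/(2*r:ℕ) + 1/2) * f j with hV
  have hsplitU : U = (∑ j ∈ Finset.range r, saw ((j:ℝ)/(2*r:ℕ)) * g j)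
      + ∑ i ∈ Finset.range r, saw ((i:ℝ)/(2*r:ℕ) + 1/2) * f i := by
    rw [hU, ← Finset.sum_range_add_sum_Ico _ (show r ≤ 2*r by omega)]
    congr 1
    rw [Finset.sum_Ico_eq_sum_range, show 2*r - r = r by omega]
    apply Finset.sum_congr rfl
    intro i _
    rw [harg1 i, hgshift i]
  have hsplitV : V = (∑ j ∈ Finset.range r, saw ((j:ℝ)/(2*r:ℕ) + 1/2) * f j)
      + ∑ i ∈ Finset.range r, saw ((i:ℝ)/(2*r:ℕ)) * g i := by
    rw [hV, ← Finset.sum_range_add_sum_Ico _ (show r ≤ 2*r by omega)]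
    congr 1
    rw [Finset.sum_Ico_eq_sum_range, show 2*r - r = r by omega]
    apply Finset.sum_congr rfl
    intro i _
    rw [harg2 i, saw_add_int, hfshift i]
  have hUV : U = V := by rw [hsplitU, hsplitV]; ring
  -- dedekindSum (2*p) = dedekindSum p + U
  have hD : dedekindSum (2*p) (2*r) = dedekindSum p (2*r) + U := by
    rw [dedekindSum, dedekindSum, hU, ← Finset.sum_add_distrib]
    apply Finset.sum_congr rfl
    intro j _
    have harg : ((2*p:ℕ):ℝ)*j/((2*r:ℕ):ℝ) = 2*((p:ℝ)*j/((2*r:ℕ):ℝ)) := by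
      push_cast; ring
    rw [harg, ← saw_doubling, hg]
    ring
  -- pointwise evaluation of the weight
  have hW : ∀ j ∈ Finset.range (2*r),
      (saw ((j:ℝ)/(2*r:ℕ)) - saw ((j:ℝ)/(2*r:ℕ) + 1/2)) * f j
        = (if j < r then -(1/2:ℝ) else 1/2) * f j := by
    intro j hj
    rw [Finset.mem_range] at hj
    rcases Nat.eq_zero_or_pos j with rfl | hj0
    · have hf0 : f 0 = 0 := by
        rw [hf]; norm_num [saw_zero]
      rw [hf0]; ring
    have hjq : (0:ℝ) < (j:ℝ)/((2*r:ℕ):ℝ) := by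
      have : (0:ℝ) < (j:ℝ) := by exact_mod_cast hj0
      positivity
    have hjq1 : (j:ℝ)/((2*r:ℕ):ℝ) < 1 := by
      rw [div_lt_one (by positivity)]
      exact_mod_cast hj
    rcases lt_trichotomy j r with hjr | hjr | hjr
    · have hhalf : (j:ℝ)/((2*r:ℕ):ℝ) < 1/2 := by
        rw [div_lt_iff₀ (by positivity)]
        push_cast
        nlinarith [show (j:ℝ) < r by exact_mod_cast hjr]
      rw [saw_of_mem_Ioo hjq hjq1, saw_of_mem_Ioo (by linarith) (by linarith),
        if_pos hjr]
      ring
    · have hrj : (j:ℝ) = (r:ℝ) := by exact_mod_cast hjr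
      have hfr : f j = 0 := by
        show saw ((p:ℝ)*j/((2*r:ℕ):ℝ)) = 0
        have harg : (p:ℝ)*(j:ℝ)/((2*r:ℕ):ℝ) = 1/2 + ((m:ℤ):ℝ) := by
          rw [hrj]
          field_simp
          push_cast [hm]
          ring
        rw [harg, saw_add_int, saw_half]
      rw [hfr]; ring
    · have hhalf : 1/2 < (j:ℝ)/((2*r:ℕ):ℝ) := by
        rw [lt_div_iff₀ (by positivity)]
        push_cast
        nlinarith [show (r:ℝ) < j by exact_mod_cast hjr]
      have e1 : (j:ℝ)/((2*r:ℕ):ℝ) + 1/2 = ((j:ℝ)/((2*r:ℕ):ℝ) - 1/2) + ((1:ℤ):ℝ) := by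
        push_cast; ring
      rw [saw_of_mem_Ioo hjq hjq1, e1, saw_add_int,
        saw_of_mem_Ioo (by linarith) (by linarith), if_neg (by omega)]
      ring
  -- sum of the weighted sums
  have hIco : ∑ j ∈ Finset.Ico r (2*r), f j = -T := by
    have h0 : ∑ j ∈ Finset.range (2*r), f j = 0 := sum_saw_zero p (2*r)
    have := Finset.sum_range_add_sum_Ico f (show r ≤ 2*r by omega)
    rw [h0] at this
    rw [hT]; linarith
  have hSV : dedekindSum p (2*r) - V = -T := by
    rw [dedekindSum, hV, ← Finset.sum_sub_distrib]
    have step1 : ∀ j ∈ Finset.range (2*r),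
        saw ((j:ℝ)/((2*r:ℕ):ℝ)) * saw ((p:ℝ)*j/((2*r:ℕ):ℝ)) - saw ((j:ℝ)/(2*r:ℕ) + 1/2) * f j
          = (if j < r then -(1/2:ℝ) else 1/2) * f j := by
      intro j hj
      rw [← hW j hj, hf]
      ring
    rw [Finset.sum_congr rfl step1,
      ← Finset.sum_range_add_sum_Ico _ (show r ≤ 2*r by omega)]
    have e1 : ∑ j ∈ Finset.range r, (if j < r then -(1/2:ℝ) else 1/2) * f j
        = -(1/2) * T := by
      rw [hT, Finset.mul_sum]
      apply Finset.sum_congr rfl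
      intro j hj
      rw [Finset.mem_range] at hj
      rw [if_pos hj, hf]
    have e2 : ∑ j ∈ Finset.Ico r (2*r), (if j < r then -(1/2:ℝ) else 1/2) * f j
        = (1/2) * (-T) := by
      rw [← hIco, Finset.mul_sum]
      apply Finset.sum_congr rfl
      intro j hj
      rw [Finset.mem_Ico] at hj
      rw [if_neg (by omega)]
    rw [e1, e2]; ring
  have hfin : dedekindSum p (2*r) - U = -T := by rw [hUV]; exact hSV
  linarith

lemma sum_range_cast (n : ℕ) : ∑ l ∈ Finset.range n, (l:ℝ) = n*(n-1)/2 := by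
  induction n with
  | zero => simp
  | succ n ih => rw [Finset.sum_range_succ, ih]; push_cast; ring

lemma nat_ceil_cast {x : ℝ} (hx : 0 < x) (h : ¬∃ n : ℤ, x = n) :
    (⌈x⌉₊:ℝ) = x + 1 - Int.fract x := by
  have hfl : 0 ≤ ⌊x⌋ := Int.floor_nonneg.mpr hx.le
  have hne : x ≠ ((⌊x⌋:ℤ):ℝ) := fun hc => h ⟨⌊x⌋, hc⟩
  have h1 : ((⌊x⌋:ℤ):ℝ) < x := lt_of_le_of_ne (Int.floor_le x) (Ne.symm hne)
  have h2 : x < ((⌊x⌋:ℤ):ℝ) + 1 := Int.lt_floor_add_one x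
  have ht : ((⌊x⌋.toNat : ℕ):ℝ) = ((⌊x⌋:ℤ):ℝ) := by
    exact_mod_cast congrArg (fun z : ℤ => (z:ℝ)) (Int.toNat_of_nonneg hfl)
  have hc : ⌈x⌉₊ = ⌊x⌋.toNat + 1 := by
    rw [Nat.ceil_eq_iff (by omega)]
    constructor
    · simpa [ht] using h1
    · push_cast [ht]; linarith
  rw [hc]
  push_cast
  rw [ht]
  have := Int.self_sub_fract x
  linarith

lemma ncount_step (p q : ℕ) (hp : 1 ≤ p) (hq : 1 ≤ q) :
    Ncount p q (1/2) = ∑ l ∈ Finset.range q, min p ⌈((p:ℝ)*q - 2*p*l)/(2*q)⌉₊ := by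
  have hpR : (0:ℝ) < p := by exact_mod_cast hp
  have hqR : (0:ℝ) < q := by exact_mod_cast hq
  have key : ∀ k l : ℕ, ((k:ℝ)/p + (l:ℝ)/q < 1 - 1/2) ↔ 2*q*k + 2*p*l < p*q := by
    intro k l
    rw [div_add_div _ _ hpR.ne' hqR.ne', div_lt_iff₀ (by positivity)]
    constructor
    · intro h
      have h2 : ((2*q*k + 2*p*l : ℕ):ℝ) < ((p*q:ℕ):ℝ) := by push_cast; nlinarith
      exact_mod_cast h2
    · intro h
      have h2 : ((2*q*k + 2*p*l : ℕ):ℝ) < ((p*q:ℕ):ℝ) := by exact_mod_cast h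
      push_cast at h2; nlinarith
  have hset : {kl : ℕ × ℕ | (kl.1:ℝ)/p + (kl.2:ℝ)/q < 1 - 1/2}
      = ↑(((Finset.range p) ×ˢ (Finset.range q)).filter
          (fun kl => 2*q*kl.1 + 2*p*kl.2 < p*q)) := by
    ext ⟨k, l⟩
    simp only [Set.mem_setOf_eq, Finset.coe_filter, Finset.mem_product,
      Finset.mem_range, Set.mem_setOf_eq]
    rw [key k l]
    constructor
    · intro hn
      refine ⟨⟨?_, ?_⟩, hn⟩
      · by_contra hk; push_neg at hk; nlinarith
      · by_contra hl; push_neg at hl; nlinarith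
    · rintro ⟨-, hn⟩; exact hn
  rw [Ncount, hset, Set.ncard_coe_finset, Finset.card_filter, Finset.sum_product_right]
  apply Finset.sum_congr rfl
  intro l _
  rw [← Finset.card_filter]
  have hfe : (Finset.range p).filter (fun k => 2*q*k + 2*p*l < p*q)
      = Finset.range (min p ⌈((p:ℝ)*q - 2*p*l)/(2*q)⌉₊) := by
    ext k
    simp only [Finset.mem_filter, Finset.mem_range, lt_min_iff]
    have hiff : (2*q*k + 2*p*l < p*q) ↔ (k < ⌈((p:ℝ)*q - 2*p*l)/(2*q)⌉₊) := by
      rw [Nat.lt_ceil, lt_div_iff₀ (by positivity)]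
      constructor
      · intro h
        have h2 : ((2*q*k + 2*p*l:ℕ):ℝ) < ((p*q:ℕ):ℝ) := by exact_mod_cast h
        push_cast at h2; nlinarith
      · intro h
        have h2 : ((2*q*k + 2*p*l:ℕ):ℝ) < ((p*q:ℕ):ℝ) := by push_cast; nlinarith
        exact_mod_cast h2
    tauto
  rw [hfe, Finset.card_range]

theorem rosen_half_even (p q : ℕ) (hp : 1 ≤ p) (hq : 1 ≤ q)
    (hq2 : Even q) (hpq : Nat.Coprime p q) :
    (Ncount p q (1/2) : ℝ) =
      p * q / 8 + (p + q)/4 - dedekindSum (2 * p) q + 2 * dedekindSum p q := by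
  -- setup
  obtain ⟨r, hqr⟩ := hq2
  have hqr2 : q = 2*r := by omega
  subst hqr2
  have hr : 1 ≤ r := by omega
  have hpo : Odd p := by
    rcases Nat.even_or_odd p with hpe | hpo
    · exfalso
      obtain ⟨a, ha⟩ := hpe
      have h2 : 2 ∣ Nat.gcd p (2*r) := Nat.dvd_gcd (by omega) (by omega)
      rw [hpq] at h2; omega
    · exact hpo
  obtain ⟨m, hm⟩ := hpo
  have hrR : (0:ℝ) < r := by exact_mod_cast hr
  have hpR : (0:ℝ) < p := by exact_mod_cast hp
  have hqR : ((2*r:ℕ):ℝ) ≠ 0 := by positivity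
  -- Step 1: counting
  rw [ncount_step p (2*r) hp (by omega)]
  -- Step 2: kill the upper half of the range
  have hzero : ∀ l ∈ Finset.Ico r (2*r),
      min p ⌈((p:ℝ)*(2*r:ℕ) - 2*p*l)/(2*(2*r:ℕ))⌉₊ = 0 := by
    intro l hl
    rw [Finset.mem_Ico] at hl
    have hlR : (r:ℝ) ≤ (l:ℝ) := by exact_mod_cast hl.1
    have hx : ((p:ℝ)*(2*r:ℕ) - 2*p*l)/(2*(2*r:ℕ)) ≤ 0 := by
      apply div_nonpos_of_nonpos_of_nonneg
      · push_cast; nlinarith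
      · positivity
    rw [Nat.ceil_eq_zero.mpr hx]
    simp
  have hsplit := Finset.sum_range_add_sum_Ico
    (fun l => min p ⌈((p:ℝ)*(2*r:ℕ) - 2*p*l)/(2*(2*r:ℕ))⌉₊) (show r ≤ 2*r by omega)
  rw [← hsplit, Finset.sum_congr rfl hzero, Finset.sum_const, smul_zero, add_zero]
  -- Step 3: on the lower half, min is the ceiling; convert to real
  have hxpos : ∀ l : ℕ, l < r → (0:ℝ) < ((p:ℝ)*(2*r:ℕ) - 2*p*l)/(2*(2*r:ℕ)) := by
    intro l hl
    apply div_pos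
    · have hlR : (l:ℝ) ≤ (r:ℝ) - 1 := by
        have : (l:ℝ) + 1 ≤ (r:ℝ) := by exact_mod_cast hl
        linarith
      push_cast; nlinarith
    · positivity
  have hxni : ∀ l : ℕ, l < r →
      ¬ ∃ n : ℤ, ((p:ℝ)*(2*r:ℕ) - 2*p*l)/(2*(2*r:ℕ)) = (n:ℝ) := by
    intro l hl ⟨n, hn⟩
    rw [div_eq_iff (by positivity)] at hn
    have hZ : (p*(2*r) : ℤ) - 2*p*l = n * (2*(2*r)) := by exact_mod_cast hn
    have hdvd : ((2*r : ℕ) : ℤ) ∣ (2*l : ℕ) * (p:ℤ) := by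
      refine ⟨(p:ℤ) - 2*n, ?_⟩
      push_cast
      linarith [hZ]
    have hdvd2 : ((2*r:ℕ):ℤ) ∣ ((2*l : ℕ):ℤ) := by
      apply Int.dvd_of_dvd_mul_left_of_gcd_one hdvd
      rw [Int.gcd_natCast_natCast]
      exact hpq.symm
    have hdvd3 : (2*r : ℕ) ∣ (2*l : ℕ) := by exact_mod_cast hdvd2
    have hl0 : l = 0 := by
      rcases Nat.eq_zero_of_dvd_of_lt hdvd3 (by omega) with h
      omega
    subst hl0
    -- then p * 2r = n * 4r forces p even
    have hr0 : (0:ℤ) < (r:ℤ) := by exact_mod_cast hr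
    have hz : (2*(r:ℤ)) * ((p:ℤ) - 2*n) = 0 := by push_cast at hZ ⊢; linarith
    rcases mul_eq_zero.mp hz with h | h
    · omega
    · have hpz : ((2*m+1 : ℕ):ℤ) = 2*n := by rw [← hm]; omega
      push_cast at hpz
      omega
  have hterm : ∀ l ∈ Finset.range r,
      ((min p ⌈((p:ℝ)*(2*r:ℕ) - 2*p*l)/(2*(2*r:ℕ))⌉₊ : ℕ):ℝ)
        = ((p:ℝ)*(2*r:ℕ) - 2*p*l)/(2*(2*r:ℕ)) + 1/2
            - saw (((p:ℝ)*(2*r:ℕ) - 2*p*l)/(2*(2*r:ℕ))) := by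
    intro l hl
    rw [Finset.mem_range] at hl
    set x : ℝ := ((p:ℝ)*(2*r:ℕ) - 2*p*l)/(2*(2*r:ℕ)) with hx
    have hmin : min p ⌈x⌉₊ = ⌈x⌉₊ := by
      apply min_eq_right
      apply Nat.le_of_lt_succ
      rw [Nat.lt_succ_iff, Nat.ceil_le]
      rw [hx, div_le_iff₀ (by positivity)]
      push_cast
      nlinarith
    rw [hmin, nat_ceil_cast (hxpos l hl) (hxni l hl),
      saw_eq_of_not (hxni l hl)]
    ring
  rw [Nat.cast_sum, Finset.sum_congr rfl hterm]
  -- Step 4: evaluate the sums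
  have hsaw : ∀ l ∈ Finset.range r,
      saw (((p:ℝ)*(2*r:ℕ) - 2*p*l)/(2*(2*r:ℕ)))
        = - saw ((p:ℝ)*l/(2*r:ℕ) + 1/2) := by
    intro l _
    have harg : ((p:ℝ)*(2*r:ℕ) - 2*p*l)/(2*(2*r:ℕ))
        = -((p:ℝ)*l/(2*r:ℕ) + 1/2) + ((m+1:ℤ):ℝ) := by
      field_simp
      push_cast [hm]
      ring
    rw [harg, saw_add_int, saw_neg]
  have hA := sum_saw_add_half p r ⟨m, hm⟩ hr
  have hT := dedekind_identity p r ⟨m, hm⟩ hr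
  have hxsum : ∑ l ∈ Finset.range r, (((p:ℝ)*(2*r:ℕ) - 2*p*l)/(2*(2*r:ℕ)) + 1/2
      - saw (((p:ℝ)*(2*r:ℕ) - 2*p*l)/(2*(2*r:ℕ))))
      = (∑ l ∈ Finset.range r, (((p:ℝ)*(2*r:ℕ) - 2*p*l)/(2*(2*r:ℕ)) + 1/2))
        + ∑ l ∈ Finset.range r, saw ((p:ℝ)*l/(2*r:ℕ) + 1/2) := by
    rw [← Finset.sum_add_distrib]
    apply Finset.sum_congr rfl
    intro l hl
    rw [hsaw l hl]
    ring
  rw [hxsum]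
  have hmain : ∑ l ∈ Finset.range r, (((p:ℝ)*(2*r:ℕ) - 2*p*l)/(2*(2*r:ℕ)) + 1/2)
      = (p:ℝ)*(2*r:ℕ)/8 + (p:ℝ)/4 + ((2*r:ℕ):ℝ)/4 := by
    have hpt : ∀ l ∈ Finset.range r,
        ((p:ℝ)*(2*r:ℕ) - 2*p*l)/(2*(2*r:ℕ)) + 1/2
          = ((p:ℝ)/2 + 1/2) - ((p:ℝ)/(2*r)) * (l:ℝ) := by
      intro l _
      have : ((2*r:ℕ):ℝ) = 2*(r:ℝ) := by push_cast; ring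
      rw [this]
      field_simp
      ring
    rw [Finset.sum_congr rfl hpt, Finset.sum_sub_distrib, Finset.sum_const,
      ← Finset.mul_sum, sum_range_cast]
    have : ((2*r:ℕ):ℝ) = 2*(r:ℝ) := by push_cast; ring
    rw [this]
    simp only [nsmul_eq_mul, Finset.card_range]
    field_simp
    ring
  rw [hmain, hA, ← hT]
  push_cast
  ring
end

section
/- There do not exist polynomials P, Q ∈ ℚ[X,Y] such that for all pairs of odd coprime integers p, q ≥ 3 one has Q(p,q) ≠ 0 and P(p,q)/Q(p,q) = σ_ord(T_{p,q}); that is, the ordinary signature of torus knots with both parameters odd is not given by any rational function of p and q. -/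
open scoped Classical

lemma ioo_iff (q k l : ℕ) (hq : 0 < q) :
    ((k:ℝ)/3 + (l:ℝ)/q ∈ Set.Ioo (1/2 : ℝ) (1/2 + 1)) ↔
      (3*q < 2*k*q + 6*l ∧ 2*k*q + 6*l < 9*q) := by
  have hq' : (0:ℝ) < q := by exact_mod_cast hq
  have e : (k:ℝ)/3 + (l:ℝ)/q = ((k:ℝ)*q + 3*l)/(3*q) := by field_simp
  rw [e, Set.mem_Ioo]
  rw [div_lt_div_iff₀ (by norm_num) (by positivity)]
  have h32 : (1/2 : ℝ) + 1 = 3/2 := by norm_num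
  rw [h32, div_lt_div_iff₀ (by positivity) (by norm_num)]
  constructor
  · rintro ⟨h1, h2⟩
    constructor
    · exact_mod_cast (by push_cast at h1 ⊢; nlinarith : ((3*q : ℕ) :ℝ) < ((2*k*q + 6*l : ℕ):ℝ))
    · exact_mod_cast (by push_cast at h2 ⊢; nlinarith : ((2*k*q + 6*l : ℕ):ℝ) < ((9*q : ℕ):ℝ))
  · rintro ⟨h1, h2⟩
    have h1' : ((3*q : ℕ) :ℝ) < ((2*k*q + 6*l : ℕ):ℝ) := by exact_mod_cast h1
    have h2' : ((2*k*q + 6*l : ℕ):ℝ) < ((9*q : ℕ):ℝ) := by exact_mod_cast h2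
    push_cast at h1' h2'
    constructor <;> nlinarith

lemma inj_on (q : ℕ) (h3 : ¬ (3 ∣ q)) (hq : 0 < q) :
    Set.InjOn (fun kl : ℕ × ℕ => (kl.1 : ℝ) / 3 + (kl.2 : ℝ) / q)
      ↑((Finset.Icc 1 2) ×ˢ (Finset.Icc 1 (q - 1))) := by
  rintro ⟨k, l⟩ hkl ⟨k', l'⟩ hkl' h
  simp only [Finset.coe_product, Set.mem_prod, Finset.mem_coe, Finset.mem_Icc] at hkl hkl'
  have hq' : (0:ℝ) < q := by exact_mod_cast hq
  simp only at h
  have e : ((k:ℝ)*q + 3*l)/(3*q) = ((k':ℝ)*q + 3*l')/(3*q) := by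
    rw [div_eq_div_iff (by positivity) (by positivity)]
    field_simp at h
    nlinarith [h]
  rw [div_eq_div_iff (by positivity) (by positivity)] at e
  have e2 : ((k*q + 3*l : ℕ):ℝ) = ((k'*q + 3*l' : ℕ):ℝ) := by
    push_cast
    nlinarith [e]
  have e3 : k*q + 3*l = k'*q + 3*l' := by exact_mod_cast e2
  obtain ⟨⟨hk1, hk2⟩, hl1, hl2⟩ := hkl
  obtain ⟨⟨hk1', hk2'⟩, hl1', hl2'⟩ := hkl'
  have h3' : ∀ a, ¬ q = 3 * a := by intro a ha; exact h3 ⟨a, ha⟩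
  have : k = k' ∧ l = l' := by
    interval_cases k <;> interval_cases k' <;> omega
  simp [Prod.ext_iff, this.1, this.2]

lemma card_filter_sigma (q : ℕ) (h3 : ¬ (3 ∣ q)) (hq : 0 < q) :
    ((sigmaSet 3 q).filter (fun y => y ∈ Set.Ioo (1/2:ℝ) (1/2+1))).card
      = (((Finset.Icc 1 2) ×ˢ (Finset.Icc 1 (q - 1))).filter
          (fun kl : ℕ × ℕ => (kl.1 : ℝ) / 3 + (kl.2 : ℝ) / q ∈ Set.Ioo (1/2:ℝ) (1/2+1))).card := by
  have h2 : sigmaSet 3 q = (((Finset.Icc 1 2 : Finset ℕ)) ×ˢ (Finset.Icc 1 (q - 1))).image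
      (fun kl : ℕ × ℕ => (kl.1 : ℝ) / 3 + (kl.2 : ℝ) / q) := by
    rfl
  rw [h2, Finset.filter_image]
  exact Finset.card_image_of_injOn ((inj_on q h3 hq).mono (by
    exact_mod_cast Finset.filter_subset _ _))

lemma sigHat_calc (m r : ℕ) (hr : r = 1 ∨ r = 5) (c : ℕ)
    (hcard : (((Finset.Icc 1 2) ×ˢ (Finset.Icc 1 (6*m+r - 1))).filter
          (fun kl : ℕ × ℕ => (kl.1 : ℝ) / 3 + (kl.2 : ℝ) / ((6*m+r : ℕ) : ℝ) ∈ Set.Ioo (1/2 : ℝ) (1/2 + 1))).card = c) :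
    sigHat 3 (6*m+r) (1/2) = ((2*(6*m+r-1) : ℕ) : ℤ) - 2*(c:ℤ) := by
  set q := 6*m+r with hqdef
  have h3 : ¬ (3 ∣ q) := by rcases hr with rfl | rfl <;> omega
  have hq : 0 < q := by omega
  have hin : ((sigmaSet 3 q).filter (fun y => y ∈ Set.Ioo (1/2:ℝ) (1/2+1))).card = c :=
    (card_filter_sigma q h3 hq).trans hcard
  have h2 : sigmaSet 3 q = (((Finset.Icc 1 2 : Finset ℕ)) ×ˢ (Finset.Icc 1 (q - 1))).image
      (fun kl : ℕ × ℕ => (kl.1 : ℝ) / 3 + (kl.2 : ℝ) / q) := rfl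
  have htot : (sigmaSet 3 q).card = 2*(q-1) := by
    rw [h2, Finset.card_image_of_injOn (inj_on q h3 hq), Finset.card_product]
    simp [Nat.card_Icc]
  have hsum : ((sigmaSet 3 q).filter (fun y => y ∈ Set.Ioo (1/2:ℝ) (1/2+1))).card
      + ((sigmaSet 3 q).filter (fun y => y ∉ Set.Ioo (1/2:ℝ) (1/2+1))).card
      = (sigmaSet 3 q).card :=
    Finset.card_filter_add_card_filter_not _
  unfold sigHat
  omega

lemma card_in (m r : ℕ) (hr : r = 1 ∨ r = 5) :
    (((Finset.Icc 1 2) ×ˢ (Finset.Icc 1 (6*m+r - 1))).filter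
          (fun kl : ℕ × ℕ => (kl.1 : ℝ) / 3 + (kl.2 : ℝ) / ((6*m+r : ℕ) : ℝ) ∈ Set.Ioo (1/2 : ℝ) (1/2 + 1))).card
      = if r = 1 then 10*m else 10*m+8 := by
  set q := 6*m+r with hqdef
  have hq : 0 < q := by omega
  have hfc : ((Finset.Icc 1 2) ×ˢ (Finset.Icc 1 (q - 1))).filter
          (fun kl : ℕ × ℕ => (kl.1 : ℝ) / 3 + (kl.2 : ℝ) / q ∈ Set.Ioo (1/2 : ℝ) (1/2 + 1))
      = ((Finset.Icc 1 2) ×ˢ (Finset.Icc 1 (q - 1))).filter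
          (fun kl : ℕ × ℕ => 3*q < 2*kl.1*q + 6*kl.2 ∧ 2*kl.1*q + 6*kl.2 < 9*q) := by
    refine Finset.filter_congr ?_
    intro ⟨k, l⟩ _
    exact ioo_iff q k l hq
  rw [hfc]
  have hset : ((Finset.Icc 1 2) ×ˢ (Finset.Icc 1 (q - 1))).filter
          (fun kl : ℕ × ℕ => 3*q < 2*kl.1*q + 6*kl.2 ∧ 2*kl.1*q + 6*kl.2 < 9*q)
      = ({1} : Finset ℕ) ×ˢ (Finset.Icc (m+1) (q-1)) ∪ ({2} : Finset ℕ) ×ˢ (Finset.Icc 1 (5*m + (r-1))) := by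
    ext ⟨k, l⟩
    simp only [Finset.mem_filter, Finset.mem_product, Finset.mem_Icc, Finset.mem_union,
      Finset.mem_singleton]
    constructor
    · rintro ⟨⟨⟨hk1, hk2⟩, hl1, hl2⟩, h1, h2⟩
      interval_cases k <;> rcases hr with rfl | rfl <;> omega
    · rintro (⟨rfl, h1, h2⟩ | ⟨rfl, h1, h2⟩) <;> rcases hr with rfl | rfl <;>
        refine ⟨⟨by omega, by omega, by omega⟩, by omega, by omega⟩
  rw [hset, Finset.card_union_of_disjoint (by
    simp only [Finset.disjoint_left, Finset.mem_product, Finset.mem_singleton, Finset.mem_Icc]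
    rintro ⟨a, b⟩ ⟨ha, _⟩ ⟨ha', _⟩
    omega)]
  simp only [Finset.card_product, Finset.card_singleton, Nat.card_Icc, one_mul]
  rcases hr with rfl | rfl <;> simp <;> omega

lemma sigHat_one (m : ℕ) : sigHat 3 (6*m+1) (1/2) = -(8*(m:ℤ)) := by
  have h := sigHat_calc m 1 (Or.inl rfl) (10*m) ((card_in m 1 (Or.inl rfl)).trans (by norm_num))
  rw [h]; push_cast; ring

lemma sigHat_five (m : ℕ) : sigHat 3 (6*m+5) (1/2) = -(8*(m:ℤ)) - 8 := by
  have h := sigHat_calc m 5 (Or.inr rfl) (10*m+8) ((card_in m 5 (Or.inr rfl)).trans (by norm_num))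
  rw [h]; push_cast; ring

noncomputable def toPoly (R : MvPolynomial (Fin 2) ℚ) : Polynomial ℚ :=
  MvPolynomial.aeval ![Polynomial.C 3, Polynomial.X] R

lemma toPoly_eval (R : MvPolynomial (Fin 2) ℚ) (y : ℚ) :
    (toPoly R).eval y = MvPolynomial.eval ![3, y] R := by
  unfold toPoly
  induction R using MvPolynomial.induction_on with
  | C a => simp
  | add p q hp hq => simp [hp, hq]
  | mul_X p n hp =>
      simp only [map_mul, Polynomial.eval_mul, hp, MvPolynomial.aeval_X, MvPolynomial.eval_X]
      congr 1
      fin_cases n <;> simp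

theorem sigma_ord_not_rational_function :
    ¬ ∃ P Q : MvPolynomial (Fin 2) ℚ,
      ∀ p q : ℕ, Odd p → Odd q → Nat.Coprime p q → 3 ≤ p → 3 ≤ q →
        MvPolynomial.eval ![(p : ℚ), (q : ℚ)] Q ≠ 0 ∧
        MvPolynomial.eval ![(p : ℚ), (q : ℚ)] P /
            MvPolynomial.eval ![(p : ℚ), (q : ℚ)] Q
          = (sigHat p q (1/2) : ℚ) := by
  rintro ⟨P, Q, H⟩
  set A := toPoly P with hA
  set B := toPoly Q with hB
  have hodd3 : Odd 3 := ⟨1, rfl⟩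
  set A1 : Polynomial ℚ := 3 * A + (4 * Polynomial.X - 4) * B with hA1
  have key1 : ∀ m : ℕ, A1.eval ((6*(m+1)+1 : ℕ) : ℚ) = 0 := by
    intro m
    set q : ℕ := 6*(m+1)+1 with hq
    have hoddq : Odd q := ⟨3*(m+1), by omega⟩
    have hcop : Nat.Coprime 3 q := (Nat.prime_three.coprime_iff_not_dvd).mpr (by omega)
    obtain ⟨hQ0, hPQ⟩ := H 3 q hodd3 hoddq hcop (le_refl 3) (by omega)
    have hsig : ((sigHat 3 q (1/2) : ℤ) : ℚ) = -(8*((m+1 : ℕ):ℚ)) := by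
      rw [hq, sigHat_one (m+1)]; push_cast; ring
    rw [hsig] at hPQ
    simp only [show ((3:ℕ):ℚ) = 3 from by norm_num] at hQ0 hPQ
    have hPeq := (div_eq_iff hQ0).mp hPQ
    have e1 : A.eval (q : ℚ) = MvPolynomial.eval ![(3 : ℚ), (q : ℚ)] P := toPoly_eval P q
    have e2 : B.eval (q : ℚ) = MvPolynomial.eval ![(3 : ℚ), (q : ℚ)] Q := toPoly_eval Q q
    simp only [hA1, Polynomial.eval_add, Polynomial.eval_mul, Polynomial.eval_sub,
      Polynomial.eval_C, Polynomial.eval_X, Polynomial.eval_ofNat, e1, e2, hPeq]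
    rw [show ((q:ℕ):ℚ) = 6*(m:ℚ)+7 from by rw [hq]; push_cast; ring]
    push_cast
    ring
  have hA1zero : A1 = 0 := by
    apply Polynomial.eq_zero_of_infinite_isRoot
    apply Set.infinite_of_injective_forall_mem
      (f := fun m : ℕ => ((6*(m+1)+1 : ℕ) : ℚ))
    · intro a b hab
      simp only [Nat.cast_inj] at hab
      omega
    · intro m; exact key1 m
  set A2 : Polynomial ℚ := 3 * A + (4 * Polynomial.X + 4) * B with hA2
  have key2 : ∀ m : ℕ, A2.eval ((6*m+5 : ℕ) : ℚ) = 0 := by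
    intro m
    set q : ℕ := 6*m+5 with hq
    have hoddq : Odd q := ⟨3*m+2, by omega⟩
    have hcop : Nat.Coprime 3 q := (Nat.prime_three.coprime_iff_not_dvd).mpr (by omega)
    obtain ⟨hQ0, hPQ⟩ := H 3 q hodd3 hoddq hcop (le_refl 3) (by omega)
    have hsig : ((sigHat 3 q (1/2) : ℤ) : ℚ) = -(8*((m : ℕ):ℚ)) - 8 := by
      rw [hq, sigHat_five m]; push_cast; ring
    rw [hsig] at hPQ
    simp only [show ((3:ℕ):ℚ) = 3 from by norm_num] at hQ0 hPQ
    have hPeq := (div_eq_iff hQ0).mp hPQ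
    have e1 : A.eval (q : ℚ) = MvPolynomial.eval ![(3 : ℚ), (q : ℚ)] P := toPoly_eval P q
    have e2 : B.eval (q : ℚ) = MvPolynomial.eval ![(3 : ℚ), (q : ℚ)] Q := toPoly_eval Q q
    simp only [hA2, Polynomial.eval_add, Polynomial.eval_mul,
      Polynomial.eval_C, Polynomial.eval_X, Polynomial.eval_ofNat, e1, e2, hPeq]
    rw [show ((q:ℕ):ℚ) = 6*(m:ℚ)+5 from by rw [hq]; push_cast; ring]
    push_cast
    ring
  have hA2zero : A2 = 0 := by
    apply Polynomial.eq_zero_of_infinite_isRoot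
    apply Set.infinite_of_injective_forall_mem
      (f := fun m : ℕ => ((6*m+5 : ℕ) : ℚ))
    · intro a b hab
      simp only [Nat.cast_inj] at hab
      omega
    · intro m; exact key2 m
  have hBzero : B = 0 := by
    have h8 : (8 : Polynomial ℚ) * B = A2 - A1 := by rw [hA1, hA2]; ring
    rw [hA1zero, hA2zero, sub_zero] at h8
    rcases mul_eq_zero.mp h8 with h | h
    · exact absurd h (by norm_num)
    · exact h
  obtain ⟨hQ0, -⟩ := H 3 5 hodd3 ⟨2, rfl⟩ (by decide) (le_refl 3) (by omega)
  apply hQ0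
  have := toPoly_eval Q 5
  rw [← hB, hBzero] at this
  simpa using this.symm
end

section
/- If p and q are odd coprime integers with p, q ≥ 3 and p divides q−1, then S(p,q) = |Σ(p,q) ∩ (0, 1/2)| = (q−1)(p−1)²/(8p). -/
open scoped Classical

lemma sum_odd_aux (n : ℕ) : ∑ k ∈ Finset.Icc 1 n, (2*n+1 - 2*k) = n^2 := by
  induction n with
  | zero => simp
  | succ n ih =>
    rw [Finset.sum_Icc_succ_top (by omega)]
    have h : ∑ k ∈ Finset.Icc 1 n, (2*(n+1)+1 - 2*k)
        = ∑ k ∈ Finset.Icc 1 n, ((2*n+1 - 2*k) + 2) := by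
      apply Finset.sum_congr rfl
      intro k hk
      simp only [Finset.mem_Icc] at hk
      omega
    rw [h, Finset.sum_add_distrib, ih, Finset.sum_const, Nat.card_Icc]
    simp only [smul_eq_mul]
    ring_nf
    omega

set_option maxHeartbeats 1000000 in
theorem count_special_case (p q : ℕ) (hp : 3 ≤ p) (hq : 3 ≤ q)
    (hop : Odd p) (hoq : Odd q) (hpq : Nat.Coprime p q) (hdvd : p ∣ (q - 1)) :
    (((sigmaSet p q).filter (fun y => y ∈ Set.Ioo (0:ℝ) (1/2))).card : ℚ)
      = ((q : ℚ) - 1) * ((p : ℚ) - 1)^2 / (8 * p) := by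
  classical
  obtain ⟨n, hn⟩ : ∃ n, p = 2*n+1 := by obtain ⟨m, hm⟩ := hop; exact ⟨m, by omega⟩
  obtain ⟨t, ht⟩ : ∃ t, q = 2*p*t+1 := by
    obtain ⟨m, hm⟩ := hdvd
    obtain ⟨j, hj⟩ := hoq
    -- q - 1 = p * m, q odd, p odd so m even
    have hm' : q = p * m + 1 := by omega
    have hme : Even m := by
      rcases Nat.even_or_odd m with h | h
      · exact h
      · exfalso
        obtain ⟨c, hc⟩ := hop.mul h
        omega
    obtain ⟨t, htt⟩ := hme
    refine ⟨t, ?_⟩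
    rw [hm', htt]; ring
  have hp0 : (0:ℝ) < p := by positivity
  have hq0 : (0:ℝ) < q := by positivity
  have hn1 : 1 ≤ n := by omega
  have ht1 : 1 ≤ t := by nlinarith
  set f : ℕ × ℕ → ℝ := fun kl => (kl.1 : ℝ) / p + (kl.2 : ℝ) / q with hf
  set s : Finset (ℕ × ℕ) := (Finset.Icc 1 (p - 1)) ×ˢ (Finset.Icc 1 (q - 1)) with hs
  -- injectivity
  have hinj : Set.InjOn f s := by
    rintro ⟨k, l⟩ hkl ⟨k', l'⟩ hkl' heq
    simp only [hs, Finset.coe_product, Set.mem_prod, Finset.mem_coe, Finset.mem_Icc] at hkl hkl'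
    simp only [hf] at heq
    have h1 : (k : ℝ) * q + l * p = k' * q + l' * p := by
      field_simp at heq
      linarith
    have h2 : (k : ℤ) * q + l * p = k' * q + l' * p := by exact_mod_cast h1
    have h3 : ((k : ℤ) - k') * q = ((l' : ℤ) - l) * p := by ring_nf; linarith
    have hpd : (p : ℤ) ∣ ((k : ℤ) - k') * q := ⟨(l' : ℤ) - l, by linarith [h3]⟩
    have hcop : IsCoprime (p : ℤ) (q : ℤ) := Int.isCoprime_iff_gcd_eq_one.mpr (by exact_mod_cast hpq)
    have hpd' : (p : ℤ) ∣ ((k : ℤ) - k') := hcop.dvd_of_dvd_mul_right hpd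
    have hkk : k = k' := by
      rcases hpd' with ⟨c, hc⟩
      have hp0' : (0:ℤ) < p := by exact_mod_cast hp0
      have hk1 : (k : ℤ) + 1 ≤ p := by exact_mod_cast (by omega : k + 1 ≤ p)
      have hk2 : (k' : ℤ) + 1 ≤ p := by exact_mod_cast (by omega : k' + 1 ≤ p)
      have hk3 : (1:ℤ) ≤ k := by exact_mod_cast hkl.1.1
      have hk4 : (1:ℤ) ≤ k' := by exact_mod_cast hkl'.1.1
      have hc0 : c = 0 := by
        rcases lt_trichotomy c 0 with h | h | h
        · nlinarith
        · exact h
        · nlinarith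
      have : (k:ℤ) = k' := by rw [hc0] at hc; omega
      exact_mod_cast this
    subst hkk
    have h5 : (l:ℤ) * p = l' * p := by linarith [h2]
    have h6 : (l:ℤ) = l' := mul_right_cancel₀ (by exact_mod_cast hp0.ne' : (p:ℤ) ≠ 0) h5
    simp only [Prod.mk.injEq]
    exact ⟨trivial, by exact_mod_cast h6⟩
  -- reduce to counting pairs
  have step1 : ((sigmaSet p q).filter (fun y => y ∈ Set.Ioo (0:ℝ) (1/2))).card
      = (s.filter (fun kl => f kl ∈ Set.Ioo (0:ℝ) (1/2))).card := by
    rw [sigmaSet, Finset.filter_image]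
    exact Finset.card_image_of_injOn (hinj.mono (Finset.coe_subset.mpr (Finset.filter_subset _ _)))
  -- condition in nat
  have step2 : ∀ kl ∈ s, (f kl ∈ Set.Ioo (0:ℝ) (1/2) ↔ 2*(kl.1*q) + 2*(kl.2*p) < p*q) := by
    rintro ⟨k, l⟩ hkl
    simp only [hs, Finset.mem_product, Finset.mem_Icc] at hkl
    have hk1 : 1 ≤ k := hkl.1.1
    have hl1 : 1 ≤ l := hkl.2.1
    constructor
    · rintro ⟨-, h⟩
      simp only [hf] at h
      have : 2*((k:ℝ)*q) + 2*(l*p) < p*q := by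
        rw [div_add_div _ _ (ne_of_gt hp0) (ne_of_gt hq0), div_lt_div_iff₀ (by positivity) two_pos] at h
        nlinarith
      exact_mod_cast this
    · intro h
      have h' : 2*((k:ℝ)*q) + 2*((l:ℝ)*p) < p*q := by exact_mod_cast h
      constructor
      · simp only [hf]; positivity
      · simp only [hf]
        rw [div_add_div _ _ (ne_of_gt hp0) (ne_of_gt hq0), div_lt_div_iff₀ (by positivity) two_pos]
        nlinarith
  have step2' : s.filter (fun kl => f kl ∈ Set.Ioo (0:ℝ) (1/2))
      = s.filter (fun kl => 2*(kl.1*q) + 2*(kl.2*p) < p*q) :=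
    Finset.filter_congr step2
  -- count pairs via sum over k
  have step3 : (s.filter (fun kl => 2*(kl.1*q) + 2*(kl.2*p) < p*q)).card
      = ∑ k ∈ Finset.Icc 1 (p-1),
          ((Finset.Icc 1 (q-1)).filter (fun l => 2*(k*q) + 2*(l*p) < p*q)).card := by
    rw [Finset.card_filter, hs, Finset.sum_product]
    exact Finset.sum_congr rfl (fun k _ => (Finset.card_filter _ _).symm)
  -- inner count
  have step4 : ∀ k ∈ Finset.Icc 1 (p-1),
      ((Finset.Icc 1 (q-1)).filter (fun l => 2*(k*q) + 2*(l*p) < p*q)).card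
        = if k ≤ n then t*(p - 2*k) else 0 := by
    intro k hk
    simp only [Finset.mem_Icc] at hk
    by_cases hkn : k ≤ n
    · simp only [hkn, if_true]
      have hfe : (Finset.Icc 1 (q-1)).filter (fun l => 2*(k*q) + 2*(l*p) < p*q)
          = Finset.Icc 1 (t*(p - 2*k)) := by
        ext l
        simp only [Finset.mem_filter, Finset.mem_Icc]
        set d := p - 2*k with hd
        have hd1 : 1 ≤ d := by omega
        have hdp : p = 2*k + d := by omega
        constructor
        · rintro ⟨⟨hl1, hl2⟩, hcond⟩
          refine ⟨hl1, ?_⟩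
          by_contra hcon
          push_neg at hcon
          have hlge : t*d + 1 ≤ l := hcon
          have : 2*(l*p) ≥ 2*((t*d+1)*p) := by
            have := Nat.mul_le_mul_right p hlge
            omega
          have hexp : p*q = 2*(k*q) + d*q := by rw [hdp]; ring
          have hdq : d*q = 2*p*(t*d) + d := by rw [ht]; ring
          have hd2p : d < 2*p := by omega
          nlinarith
        · rintro ⟨hl1, hl2⟩
          have hlq : l ≤ q - 1 := by
            have h7 : t*d ≤ t*p := Nat.mul_le_mul_left t (by omega)
            have hq1 : q - 1 = t*p + t*p := by
              rw [ht]; simp only [Nat.add_sub_cancel]; ring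
            omega
          refine ⟨⟨hl1, hlq⟩, ?_⟩
          have hexp : p*q = 2*(k*q) + d*q := by rw [hdp]; ring
          have hdq : d*q = 2*p*(t*d) + d := by rw [ht]; ring
          have : 2*(l*p) ≤ 2*((t*d)*p) := by
            have := Nat.mul_le_mul_right p hl2
            omega
          nlinarith
      rw [hfe, Nat.card_Icc]
      omega
    · simp only [hkn, if_false]
      rw [Finset.card_eq_zero, Finset.filter_eq_empty_iff]
      intro l hl
      simp only [Finset.mem_Icc] at hl
      push_neg
      have hkp : p + 1 ≤ 2*k := by omega
      have : (p+1)*q ≤ 2*k*q := Nat.mul_le_mul_right q hkp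
      have hl1 : 1 ≤ l := hl.1
      nlinarith
  -- total sum
  have step5 : ∑ k ∈ Finset.Icc 1 (p-1),
      (if k ≤ n then t*(p - 2*k) else 0) = t * n^2 := by
    rw [← Finset.sum_subset (Finset.Icc_subset_Icc_right (by omega : n ≤ p - 1))
      (by intro k hk hk'; simp only [Finset.mem_Icc] at hk hk'; simp [show ¬ k ≤ n by omega])]
    have : ∀ k ∈ Finset.Icc 1 n, (if k ≤ n then t*(p - 2*k) else 0) = t*(2*n+1 - 2*k) := by
      intro k hk
      simp only [Finset.mem_Icc] at hk
      simp [hk.2, hn]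
    rw [Finset.sum_congr rfl this, ← Finset.mul_sum, sum_odd_aux]
  -- finish
  have hcard : ((sigmaSet p q).filter (fun y => y ∈ Set.Ioo (0:ℝ) (1/2))).card = t * n^2 := by
    rw [step1, step2', step3, Finset.sum_congr rfl step4, step5]
  rw [hcard]
  have hpQ : (p : ℚ) = 2*n+1 := by exact_mod_cast congrArg (Nat.cast : ℕ → ℚ) hn
  have hqQ : (q : ℚ) = 2*p*t+1 := by exact_mod_cast congrArg (Nat.cast : ℕ → ℚ) ht
  rw [hqQ, hpQ]
  push_cast
  have : (2*(n:ℚ)+1) ≠ 0 := by positivity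
  field_simp
  ring
end

section
/- For coprime integers p, q ≥ 2, define σ̂(x) = |Σ(p,q) \ (x, x+1)| − |Σ(p,q) ∩ (x, x+1)| for all x ∈ (0,1). Then the averaged sums converge: lim_{m→∞} (1/m) ∑_{k=1}^{m−1} σ̂(k/m) = ∫₀¹ σ̂(x) dx = −(1/3)(p − 1/p)(q − 1/q). -/
open scoped Classical

lemma sigma_mem_bounds (p q : ℕ) (hp : 2 ≤ p) (hq : 2 ≤ q) (hpq : Nat.Coprime p q) :
    ∀ y ∈ sigmaSet p q, 0 < y ∧ y < 2 ∧ y ≠ 1 := by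
  have hp0 : (0:ℝ) < p := by positivity
  have hq0 : (0:ℝ) < q := by positivity
  intro y hy
  rw [sigmaSet, Finset.mem_image] at hy
  obtain ⟨kl, hkl, rfl⟩ := hy
  rw [Finset.mem_product, Finset.mem_Icc, Finset.mem_Icc] at hkl
  obtain ⟨⟨hk1, hk2⟩, hl1, hl2⟩ := hkl
  have hk2' : kl.1 ≤ p - 1 := hk2
  have hk2R : (kl.1:ℝ) ≤ (p:ℝ) - 1 := by
    have h := (Nat.cast_le (α := ℝ)).mpr hk2
    rw [Nat.cast_sub (by omega : 1 ≤ p)] at h; exact_mod_cast h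
  have hl2R : (kl.2:ℝ) ≤ (q:ℝ) - 1 := by
    have h := (Nat.cast_le (α := ℝ)).mpr hl2
    rw [Nat.cast_sub (by omega : 1 ≤ q)] at h; exact_mod_cast h
  have hk1R : (1:ℝ) ≤ kl.1 := by exact_mod_cast hk1
  have hl1R : (1:ℝ) ≤ kl.2 := by exact_mod_cast hl1
  refine ⟨?_, ?_, ?_⟩
  · have h1 : (0:ℝ) < (kl.1:ℝ)/p := div_pos (by linarith) hp0
    have h2 : (0:ℝ) < (kl.2:ℝ)/q := div_pos (by linarith) hq0
    linarith
  · have h1 : (kl.1:ℝ)/p ≤ ((p:ℝ)-1)/p := by gcongr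
    have h2 : (kl.2:ℝ)/q ≤ ((q:ℝ)-1)/q := by gcongr
    have h3 : ((p:ℝ)-1)/p < 1 := by rw [div_lt_one hp0]; linarith
    have h4 : ((q:ℝ)-1)/q < 1 := by rw [div_lt_one hq0]; linarith
    linarith
  · intro h1
    have h2 : (kl.1:ℝ)*q + kl.2*p = p*q := by
      field_simp at h1; linarith
    have h3 : kl.1*q + kl.2*p = p*q := by exact_mod_cast h2
    have hdvd : p ∣ kl.1 * q := by
      refine ⟨q - kl.2, ?_⟩
      have e2 : p * (q - kl.2) = p*q - p*kl.2 := Nat.left_distrib p q 0 ▸ by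
        have := Nat.mul_sub p q kl.2; omega
      have e3 : p*kl.2 = kl.2*p := Nat.mul_comm _ _
      omega
    have hk : p ∣ kl.1 := (Nat.Coprime.dvd_of_dvd_mul_right hpq) hdvd
    have := Nat.le_of_dvd (by omega) hk
    omega

lemma sigma_inj (p q : ℕ) (hp : 2 ≤ p) (hq : 2 ≤ q) (hpq : Nat.Coprime p q) :
    ∀ a ∈ (Finset.Icc 1 (p-1)) ×ˢ (Finset.Icc 1 (q-1)),
    ∀ b ∈ (Finset.Icc 1 (p-1)) ×ˢ (Finset.Icc 1 (q-1)),
      ((a.1:ℝ)/p + (a.2:ℝ)/q = (b.1:ℝ)/p + (b.2:ℝ)/q) → a = b := by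
  intro a ha b hb heq
  rw [Finset.mem_product, Finset.mem_Icc, Finset.mem_Icc] at ha hb
  have hp0 : (0:ℝ) < p := by positivity
  have hq0 : (0:ℝ) < q := by positivity
  have h2 : (a.1:ℝ)*q + a.2*p = (b.1:ℝ)*q + b.2*p := by
    field_simp at heq; linarith
  have h3 : a.1*q + a.2*p = b.1*q + b.2*p := by exact_mod_cast h2
  haveI : NeZero p := ⟨by omega⟩
  have hz : ((a.1 : ZMod p)) * q = ((b.1 : ZMod p)) * q := by
    have hc := congrArg (fun n : ℕ => (n : ZMod p)) h3
    push_cast at hc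
    simpa [ZMod.natCast_self] using hc
  have hu : IsUnit (q : ZMod p) := (ZMod.isUnit_iff_coprime q p).mpr hpq.symm
  have h4 : (a.1 : ZMod p) = b.1 := hu.mul_right_cancel hz
  have h5 : a.1 = b.1 := by
    have hv := congrArg ZMod.val h4
    rwa [ZMod.val_cast_of_lt (by omega), ZMod.val_cast_of_lt (by omega)] at hv
  have h6 : a.2 = b.2 := by
    rw [h5] at h3
    have : a.2 * p = b.2 * p := by omega
    exact Nat.eq_of_mul_eq_mul_right (by omega) this
  exact Prod.ext h5 h6

lemma sigHat_decomp (p q : ℕ) (x : ℝ) :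
    ((sigHat p q x : ℤ) : ℝ) = ((sigmaSet p q).card : ℝ)
      - 2 * ∑ y ∈ sigmaSet p q, (if x ∈ Set.Ioo (y-1) y then (1:ℝ) else 0) := by
  have hsplit := Finset.card_filter_add_card_filter_not
    (s := sigmaSet p q) (p := fun y => y ∈ Set.Ioo x (x + 1))
  have hcount : (∑ y ∈ sigmaSet p q, (if x ∈ Set.Ioo (y-1) y then (1:ℝ) else 0))
      = (((sigmaSet p q).filter (fun y => y ∈ Set.Ioo x (x + 1))).card : ℝ) := by
    rw [← Finset.sum_boole]
    apply Finset.sum_congr rfl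
    intro y hy
    have : (x ∈ Set.Ioo (y-1) y) ↔ (y ∈ Set.Ioo x (x+1)) := by
      simp only [Set.mem_Ioo]
      constructor
      · rintro ⟨h1, h2⟩; exact ⟨h2, by linarith⟩
      · rintro ⟨h1, h2⟩; exact ⟨by linarith, h1⟩
    simp only [this]
  rw [hcount, sigHat]
  push_cast
  have : (((sigmaSet p q).filter (fun y => y ∈ Set.Ioo x (x + 1))).card : ℝ)
      + (((sigmaSet p q).filter (fun y => ¬ y ∈ Set.Ioo x (x + 1))).card : ℝ)
      = ((sigmaSet p q).card : ℝ) := by exact_mod_cast congrArg (Nat.cast : ℕ → ℝ) hsplit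
  linarith

lemma indicator_ii (y : ℝ) : IntervalIntegrable
    (fun x => if x ∈ Set.Ioo (y-1) y then (1:ℝ) else 0) MeasureTheory.volume 0 1 := by
  have hfe : (fun x => if x ∈ Set.Ioo (y-1) y then (1:ℝ) else 0)
      = Set.indicator (Set.Ioo (y-1) y) (fun _ => (1:ℝ)) := by
    funext x; rw [Set.indicator_apply]
  rw [hfe, intervalIntegrable_iff]
  apply (MeasureTheory.integrable_indicator_iff measurableSet_Ioo).2
  apply (MeasureTheory.integrableOn_const_iff (by simp)).2
  right
  calc (MeasureTheory.volume.restrict (Set.uIoc (0:ℝ) 1)) (Set.Ioo (y-1) y)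
      ≤ MeasureTheory.volume (Set.Ioo (y-1) y) := MeasureTheory.Measure.restrict_apply_le _ _
    _ < ⊤ := by rw [Real.volume_Ioo]; exact ENNReal.ofReal_lt_top

lemma indicator_integral (y : ℝ) (hy0 : 0 < y) (hy2 : y < 2) (hy1 : y ≠ 1) :
    ∫ x in (0:ℝ)..1, (if x ∈ Set.Ioo (y-1) y then (1:ℝ) else 0) = 1 - |y - 1| := by
  have hfe : (fun x => if x ∈ Set.Ioo (y-1) y then (1:ℝ) else 0)
      = Set.indicator (Set.Ioo (y-1) y) (fun _ => (1:ℝ)) := by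
    funext x; rw [Set.indicator_apply]
  rw [intervalIntegral.integral_of_le zero_le_one, hfe]
  rw [show (Set.indicator (Set.Ioo (y-1) y) (fun _ => (1:ℝ))) = Set.indicator (Set.Ioo (y-1) y) 1
    from rfl]
  rw [MeasureTheory.integral_indicator_one measurableSet_Ioo,
    MeasureTheory.measureReal_def, MeasureTheory.Measure.restrict_apply measurableSet_Ioo]
  rcases lt_or_gt_of_ne hy1 with hlt | hgt
  · have hset : Set.Ioo (y-1) y ∩ Set.Ioc (0:ℝ) 1 = Set.Ioo 0 y := by
      ext x
      simp only [Set.mem_inter_iff, Set.mem_Ioo, Set.mem_Ioc]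
      constructor
      · rintro ⟨⟨h1, h2⟩, h3, h4⟩; exact ⟨h3, h2⟩
      · rintro ⟨h1, h2⟩; exact ⟨⟨by linarith, h2⟩, h1, by linarith⟩
    rw [hset, Real.volume_Ioo, ENNReal.toReal_ofReal (by linarith)]
    rw [abs_of_nonpos (by linarith)]; ring
  · have hset : Set.Ioo (y-1) y ∩ Set.Ioc (0:ℝ) 1 = Set.Ioc (y-1) 1 := by
      ext x
      simp only [Set.mem_inter_iff, Set.mem_Ioo, Set.mem_Ioc]
      constructor
      · rintro ⟨⟨h1, h2⟩, h3, h4⟩; exact ⟨h1, h4⟩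
      · rintro ⟨h1, h2⟩; exact ⟨⟨h1, by linarith⟩, by linarith, h2⟩
    have hnn : (0:ℝ) ≤ 1 - (y-1) := by linarith
    have hnn2 : (0:ℝ) ≤ y - 1 := by linarith
    rw [hset, Real.volume_Ioc]
    rw [ENNReal.toReal_ofReal hnn]
    rw [abs_of_nonneg hnn2]

noncomputable def rcount (m : ℕ) (y : ℝ) : ℕ :=
  ((Finset.Icc 1 (m-1)).filter (fun k : ℕ => ((k:ℝ)/m) ∈ Set.Ioo (y-1) y)).card

lemma natsub_cast_ge (a b : ℕ) : ((a - b : ℕ):ℝ) ≥ (a:ℝ) - b := by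
  rcases le_total b a with h | h
  · rw [Nat.cast_sub h]
  · have h1 : a - b = 0 := by omega
    have h2 : (a:ℝ) ≤ b := by exact_mod_cast h
    rw [h1]; simp; linarith

lemma rcount_bounds (m : ℕ) (hm : 1 ≤ m) (y : ℝ) (hy0 : 0 < y) (hy2 : y < 2) (hy1 : y ≠ 1) :
    (m:ℝ)*(1-|y-1|) - 2 ≤ (rcount m y : ℝ) ∧ (rcount m y : ℝ) ≤ (m:ℝ)*(1-|y-1|) + 2 := by
  have hm0 : (0:ℝ) < m := by exact_mod_cast hm
  have hrc : ((Finset.Icc 1 (m-1)).filter (fun k : ℕ => ((k:ℝ)/m) ∈ Set.Ioo (y-1) y)).card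
      = rcount m y := rfl
  rcases lt_or_gt_of_ne hy1 with hlt | hgt
  · -- y < 1, length = y
    have habs : (m:ℝ)*(1-|y-1|) = m*y := by rw [abs_of_nonpos (by linarith)]; ring
    set F : ℕ := ⌊(m:ℝ)*y⌋₊ with hF
    have hFle : (F:ℝ) ≤ (m:ℝ)*y := Nat.floor_le (by positivity)
    have hFgt : (m:ℝ)*y < F + 1 := Nat.lt_floor_add_one _
    constructor
    · -- lower bound
      have hsub : Finset.Icc 1 (F-1) ⊆ (Finset.Icc 1 (m-1)).filter
          (fun k : ℕ => ((k:ℝ)/m) ∈ Set.Ioo (y-1) y) := by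
        intro k hk
        rw [Finset.mem_Icc] at hk
        obtain ⟨hk1, hk2⟩ := hk
        have hF1 : 1 ≤ F := by omega
        have hkR : (k:ℝ) ≤ (F:ℝ) - 1 := by
          have h := (Nat.cast_le (α := ℝ)).mpr hk2
          rw [Nat.cast_sub hF1] at h; push_cast at h; linarith
        have hkmy : (k:ℝ) < (m:ℝ)*y := by linarith
        have hkm : (k:ℝ) < (m:ℝ) - 1 + 1 := by nlinarith
        rw [Finset.mem_filter, Finset.mem_Icc]
        refine ⟨⟨hk1, ?_⟩, ?_, ?_⟩
        · have : (k:ℝ) < ((m:ℝ) - 1) + 1 := hkm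
          have hkm' : k < m := by exact_mod_cast (by linarith : (k:ℝ) < m)
          omega
        · have : (0:ℝ) < (k:ℝ)/m := div_pos (by exact_mod_cast hk1) hm0
          linarith
        · rw [div_lt_iff₀ hm0]; linarith [mul_comm y (m:ℝ)]
      have hcard := Finset.card_le_card hsub
      rw [hrc] at hcard
      rw [Nat.card_Icc] at hcard
      have : ((F - 1 + 1 - 1 : ℕ):ℝ) ≤ (rcount m y : ℝ) := by
        exact_mod_cast hcard
      have h2 : ((F - 1 : ℕ):ℝ) ≥ (F:ℝ) - 1 := by
        have := natsub_cast_ge F 1; push_cast at this; linarith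
      rw [show F - 1 + 1 - 1 = F - 1 from by omega] at this
      rw [habs]; linarith
    · -- upper bound
      have hsub : (Finset.Icc 1 (m-1)).filter (fun k : ℕ => ((k:ℝ)/m) ∈ Set.Ioo (y-1) y)
          ⊆ Finset.Icc 1 F := by
        intro k hk
        rw [Finset.mem_filter, Finset.mem_Icc] at hk
        obtain ⟨⟨hk1, hk2⟩, hmem⟩ := hk
        rw [Set.mem_Ioo] at hmem
        have : (k:ℝ) < y * m := (div_lt_iff₀ hm0).1 hmem.2
        rw [Finset.mem_Icc]
        exact ⟨hk1, Nat.le_floor (by linarith [mul_comm y (m:ℝ)])⟩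
      have hcard := Finset.card_le_card hsub
      rw [hrc] at hcard
      rw [Nat.card_Icc, show F + 1 - 1 = F from by omega] at hcard
      have h1 : (rcount m y : ℝ) ≤ (F:ℝ) := by exact_mod_cast hcard
      rw [habs]; linarith
  · -- y > 1, length = 2 - y
    have habs : (m:ℝ)*(1-|y-1|) = m*(2-y) := by rw [abs_of_nonneg (by linarith)]; ring
    set F : ℕ := ⌊(m:ℝ)*(y-1)⌋₊ with hF
    have hFle : (F:ℝ) ≤ (m:ℝ)*(y-1) := Nat.floor_le (mul_nonneg (le_of_lt hm0) (by linarith))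
    have hFgt : (m:ℝ)*(y-1) < F + 1 := Nat.lt_floor_add_one _
    constructor
    · -- lower bound
      have hsub : Finset.Icc (F+2) (m-1) ⊆ (Finset.Icc 1 (m-1)).filter
          (fun k : ℕ => ((k:ℝ)/m) ∈ Set.Ioo (y-1) y) := by
        intro k hk
        rw [Finset.mem_Icc] at hk
        obtain ⟨hk1, hk2⟩ := hk
        have hkR : ((F:ℝ)) + 2 ≤ (k:ℝ) := by exact_mod_cast hk1
        have hkm : (k:ℝ) ≤ ((m:ℝ)) - 1 := by
          have h := (Nat.cast_le (α := ℝ)).mpr hk2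
          rw [Nat.cast_sub hm] at h; push_cast at h; linarith
        rw [Finset.mem_filter, Finset.mem_Icc]
        refine ⟨⟨by omega, hk2⟩, ?_, ?_⟩
        · rw [lt_div_iff₀ hm0]; nlinarith
        · rw [div_lt_iff₀ hm0]; nlinarith
      have hcard := Finset.card_le_card hsub
      rw [hrc] at hcard
      rw [Nat.card_Icc] at hcard
      have h1 : ((m - 1 + 1 - (F+2) : ℕ):ℝ) ≤ (rcount m y : ℝ) := by exact_mod_cast hcard
      rw [show m - 1 + 1 - (F+2) = m - (F+2) from by omega] at h1
      have h2 := natsub_cast_ge m (F+2)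
      have h3 : ((F+2:ℕ):ℝ) = (F:ℝ) + 2 := by push_cast; ring
      rw [habs]; rw [h3] at h2; linarith
    · -- upper bound
      have hsub : (Finset.Icc 1 (m-1)).filter (fun k : ℕ => ((k:ℝ)/m) ∈ Set.Ioo (y-1) y)
          ⊆ Finset.Icc (F+1) (m-1) := by
        intro k hk
        rw [Finset.mem_filter, Finset.mem_Icc] at hk
        obtain ⟨⟨hk1, hk2⟩, hmem⟩ := hk
        rw [Set.mem_Ioo] at hmem
        have h1 : (y-1) * m < k := (lt_div_iff₀ hm0).1 hmem.1
        have h2 : (F:ℝ) < k := by linarith [mul_comm (y-1) (m:ℝ)]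
        have h3 : F < k := by exact_mod_cast h2
        rw [Finset.mem_Icc]
        exact ⟨by omega, hk2⟩
      have hcard := Finset.card_le_card hsub
      rw [hrc] at hcard
      rw [Nat.card_Icc] at hcard
      rw [show m - 1 + 1 - (F+1) = m - (F+1) from by omega] at hcard
      have h1 : (rcount m y : ℝ) ≤ ((m - (F+1) : ℕ):ℝ) := by exact_mod_cast hcard
      rw [habs]
      by_cases hFm : F + 1 ≤ m
      · have : ((m - (F+1) : ℕ):ℝ) = (m:ℝ) - (F+1) := by
          rw [Nat.cast_sub hFm]; push_cast; ring
        rw [this] at h1; linarith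
      · have : m - (F+1) = 0 := by omega
        rw [this] at h1; simp at h1
        have h1R : ((rcount m y : ℕ):ℝ) = 0 := by exact_mod_cast h1
        have : (0:ℝ) ≤ (m:ℝ)*(2-y) := by nlinarith
        linarith

lemma rcount_tendsto (y : ℝ) (hy0 : 0 < y) (hy2 : y < 2) (hy1 : y ≠ 1) :
    Filter.Tendsto (fun m : ℕ => (rcount m y : ℝ)/(m:ℝ)) Filter.atTop (nhds (1-|y-1|)) := by
  have h0 : Filter.Tendsto (fun m : ℕ => ((rcount m y:ℝ) - (m:ℝ)*(1-|y-1|))/(m:ℝ))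
      Filter.atTop (nhds 0) := by
    refine squeeze_zero_norm' ?_ (tendsto_const_div_atTop_nhds_zero_nat 2)
    · filter_upwards [Filter.eventually_ge_atTop 1] with m hm
      have hm0 : (0:ℝ) < m := by exact_mod_cast hm
      obtain ⟨hlo, hhi⟩ := rcount_bounds m hm y hy0 hy2 hy1
      rw [Real.norm_eq_abs, abs_div, abs_of_pos hm0]
      gcongr
      rw [abs_le]; constructor <;> linarith
  have h1 := h0.add_const (1-|y-1|)
  rw [zero_add] at h1
  apply h1.congr'
  filter_upwards [Filter.eventually_ge_atTop 1] with m hm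
  have hm0 : (0:ℝ) < m := by exact_mod_cast hm
  field_simp
  ring
lemma sum_range_id_real (n : ℕ) : ∑ i ∈ Finset.range n, (i:ℝ) = n*(n-1)/2 := by
  induction n with
  | zero => simp
  | succ n ih => rw [Finset.sum_range_succ, ih]; push_cast; ring

lemma sum_range_sq_real (n : ℕ) : ∑ i ∈ Finset.range n, (i:ℝ)^2 = n*(n-1)*(2*n-1)/6 := by
  induction n with
  | zero => simp
  | succ n ih => rw [Finset.sum_range_succ, ih]; push_cast; ring

lemma Icc_one_range (n : ℕ) (f : ℕ → ℝ) (hf : f 0 = 0) :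
    ∑ i ∈ Finset.Icc 1 n, f i = ∑ i ∈ Finset.range (n+1), f i := by
  rw [Finset.range_eq_Ico, ← Finset.sum_Ico_consecutive f (Nat.zero_le 1) (by omega),
    ← Finset.Ico_add_one_right_eq_Icc]
  simp [hf]

lemma sum_Icc_id_real (n : ℕ) : ∑ i ∈ Finset.Icc 1 n, (i:ℝ) = n*(n+1)/2 := by
  rw [Icc_one_range _ _ (by simp), sum_range_id_real]; push_cast; ring

lemma sum_Icc_sq_real (n : ℕ) : ∑ i ∈ Finset.Icc 1 n, (i:ℝ)^2 = n*(n+1)*(2*n+1)/6 := by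
  rw [Icc_one_range _ _ (by simp), sum_range_sq_real]; push_cast; ring

lemma mod_mul_inv (q : ℕ) [NeZero q] (a b : ℕ) (hab : ((a : ZMod q) * b = 1))
    (l : ℕ) (hl : l < q) : ((l * a) % q * b) % q = l := by
  have h1 : ((((l * a) % q) * b : ℕ) : ZMod q) = ((l : ZMod q)) := by
    rw [Nat.cast_mul, ZMod.natCast_mod, Nat.cast_mul, mul_assoc, hab, mul_one]
  calc ((l * a) % q * b) % q = (((l * a) % q * b : ℕ) : ZMod q).val := (ZMod.val_natCast q _).symm
    _ = ((l : ZMod q)).val := by rw [h1]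
    _ = l := by rw [ZMod.val_natCast]; exact Nat.mod_eq_of_lt hl

lemma mulmod_bij (q p : ℕ) (hq : 0 < q) (hpq : Nat.Coprime p q) (g : ℕ → ℝ) :
    ∑ l ∈ Finset.range q, g ((l * p) % q) = ∑ r ∈ Finset.range q, g r := by
  haveI : NeZero q := ⟨by omega⟩
  set u : (ZMod q)ˣ := ZMod.unitOfCoprime p hpq with hu
  set pinv : ℕ := ((u⁻¹ : (ZMod q)ˣ) : ZMod q).val with hpinv
  have hcast : ((pinv : ℕ) : ZMod q) = ((u⁻¹ : (ZMod q)ˣ) : ZMod q) := by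
    simp [hpinv, ZMod.natCast_val, ZMod.cast_id]
  have h1 : ((p : ZMod q) * pinv = 1) := by
    rw [hcast, ← ZMod.coe_unitOfCoprime p hpq, ← hu, ← Units.val_mul, mul_inv_cancel, Units.val_one]
  have h2 : ((pinv : ZMod q) * p = 1) := by rw [mul_comm]; exact h1
  refine Finset.sum_nbij' (fun l => (l * p) % q) (fun r => (r * pinv) % q) ?_ ?_ ?_ ?_ ?_
  · intro a ha; exact Finset.mem_range.mpr (Nat.mod_lt _ hq)
  · intro a ha; exact Finset.mem_range.mpr (Nat.mod_lt _ hq)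
  · intro a ha; exact mod_mul_inv q p pinv h1 a (Finset.mem_range.mp ha)
  · intro a ha; exact mod_mul_inv q pinv p h2 a (Finset.mem_range.mp ha)
  · intro a ha; rfl

lemma abs_eq_self_add (a : ℝ) : |a| = a + 2 * max (-a) 0 := by
  rcases le_total 0 a with h | h
  · rw [abs_of_nonneg h, max_eq_right (by linarith)]; ring
  · rw [abs_of_nonpos h, max_eq_left (by linarith)]; ring

set_option maxHeartbeats 1000000 in
lemma abs_sum_eval (p q : ℕ) (hp : 2 ≤ p) (hq : 2 ≤ q) (hpq : Nat.Coprime p q) :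
    ∑ kl ∈ (Finset.Icc 1 (p-1)) ×ˢ (Finset.Icc 1 (q-1)),
      |(kl.1:ℝ)*q + kl.2*p - p*q|
    = (p:ℝ)*q*(p-1)*(q-1)/2 - ((p:ℝ)^2-1)*((q:ℝ)^2-1)/6 := by
  have hp0 : (0:ℝ) < p := by positivity
  have hq0 : (0:ℝ) < q := by positivity
  have hp1 : ((p - 1 : ℕ) : ℝ) = (p:ℝ) - 1 := by push_cast [Nat.cast_sub (by omega : 1 ≤ p)]; ring
  have hq1 : ((q - 1 : ℕ) : ℝ) = (q:ℝ) - 1 := by push_cast [Nat.cast_sub (by omega : 1 ≤ q)]; ring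
  have sumIdP : ∑ k ∈ Finset.Icc 1 (p-1), (k:ℝ) = (p-1)*p/2 := by
    rw [sum_Icc_id_real, hp1]; ring
  have sumIdQ : ∑ l ∈ Finset.Icc 1 (q-1), (l:ℝ) = ((q:ℝ)-1)*q/2 := by
    rw [sum_Icc_id_real, hq1]; ring
  have sumSqQ : ∑ l ∈ Finset.Icc 1 (q-1), (l:ℝ)^2 = ((q:ℝ)-1)*q*(2*q-1)/6 := by
    rw [sum_Icc_sq_real, hq1]; ring
  have cardP : ((Finset.Icc 1 (p-1)).card : ℝ) = (p:ℝ) - 1 := by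
    rw [Nat.card_Icc]; rw [show p - 1 + 1 - 1 = p - 1 from by omega, hp1]
  have cardQ : ((Finset.Icc 1 (q-1)).card : ℝ) = (q:ℝ) - 1 := by
    rw [Nat.card_Icc]; rw [show q - 1 + 1 - 1 = q - 1 from by omega, hq1]
  -- the signed sum vanishes
  have hzero : ∑ kl ∈ (Finset.Icc 1 (p-1)) ×ˢ (Finset.Icc 1 (q-1)),
      ((kl.1:ℝ)*q + kl.2*p - p*q) = 0 := by
    rw [Finset.sum_product]
    have inner : ∀ k ∈ Finset.Icc 1 (p-1), ∑ l ∈ Finset.Icc 1 (q-1),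
        ((k:ℝ)*q + l*p - p*q)
        = ((q:ℝ)-1)*((k:ℝ)*q - p*q) + ((q:ℝ)-1)*q/2*p := by
      intro k hk
      rw [show (fun l : ℕ => (k:ℝ)*q + l*p - p*q) = (fun l : ℕ => ((k:ℝ)*q - p*q) + (l:ℝ)*p)
        from by funext l; ring]
      rw [Finset.sum_add_distrib, Finset.sum_const, ← Finset.sum_mul, sumIdQ,
        nsmul_eq_mul, cardQ]
    rw [Finset.sum_congr rfl inner, Finset.sum_add_distrib, Finset.sum_const,
      nsmul_eq_mul, cardP]
    rw [show (fun k : ℕ => ((q:ℝ)-1)*((k:ℝ)*q - p*q)) = (fun k : ℕ => ((q:ℝ)-1)*q*(k:ℝ) - ((q:ℝ)-1)*(p*q)) from by funext k; ring]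
    rw [Finset.sum_sub_distrib, ← Finset.mul_sum, sumIdP, Finset.sum_const, nsmul_eq_mul, cardP]
    ring
  -- inner sums of max terms
  have inner_max : ∀ l ∈ Finset.Icc 1 (q-1),
      ∑ k ∈ Finset.Icc 1 (p-1), max ((p:ℝ)*q - (k:ℝ)*q - (l:ℝ)*p) 0
      = (((p:ℝ)*q - l*p)^2 - q*((p:ℝ)*q - l*p)
          + ((q:ℝ) - ((l*p) % q : ℕ))*(((l*p) % q : ℕ)))/(2*q) := by
    intro l hl
    rw [Finset.mem_Icc] at hl
    set r : ℕ := (l*p) % q with hrdef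
    set d : ℕ := (l*p) / q with hddef
    have hdm : q * d + r = l * p := Nat.div_add_mod (l*p) q
    have hrq : r < q := Nat.mod_lt _ (by omega)
    have hr1 : 1 ≤ r := by
      rcases Nat.eq_zero_or_pos r with h0 | h0
      · exfalso
        have hdvd : q ∣ l * p := Nat.dvd_of_mod_eq_zero h0
        have : q ∣ l := (Nat.Coprime.dvd_of_dvd_mul_right (hpq.symm)) hdvd
        have := Nat.le_of_dvd (by omega) this
        omega
      · omega
    have hdp : d ≤ p - 1 := by
      by_contra h
      have hd : p ≤ d := by omega
      have h0 : q * p ≤ q * d := Nat.mul_le_mul_left q hd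
      have h1 : l * p ≤ (q-1) * p := Nat.mul_le_mul_right p (by omega)
      have h2 : (q-1) * p + p = q * p := by
        have hq' : (q-1) + 1 = q := by omega
        calc (q-1)*p + p = ((q-1)+1)*p := by ring
          _ = q*p := by rw [hq']
      omega
    clear_value r d
    clear hrdef hddef
    set K : ℕ := p - 1 - d with hKdef
    clear_value K
    have hKp : K ≤ p - 1 := by omega
    have hdmR : (q:ℝ) * d + r = (l:ℝ) * p := by exact_mod_cast hdm
    have hKR : (K:ℝ) = (p:ℝ) - 1 - d := by
      rw [hKdef]; push_cast [Nat.cast_sub (by omega : 1 ≤ p), Nat.cast_sub hdp]; ring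
    have hrR : ((r:ℕ):ℝ) < q := by exact_mod_cast hrq
    have hr1R : (1:ℝ) ≤ r := by exact_mod_cast hr1
    have hqK : (q:ℝ) * K = ((p:ℝ)*q - (l:ℝ)*p) - ((q:ℝ) - r) := by
      rw [hKR]; linear_combination -hdmR
    have hsub : Finset.Icc 1 K ⊆ Finset.Icc 1 (p-1) :=
      Finset.Icc_subset_Icc_right hKp
    have hout : ∀ k ∈ Finset.Icc 1 (p-1), k ∉ Finset.Icc 1 K →
        max ((p:ℝ)*q - (k:ℝ)*q - (l:ℝ)*p) 0 = 0 := by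
      intro k hk hk2
      rw [Finset.mem_Icc] at hk hk2
      have hkK : K + 1 ≤ k := by omega
      have hkKR : ((K:ℕ):ℝ) + 1 ≤ (k:ℝ) := by exact_mod_cast hkK
      apply max_eq_right
      nlinarith [hq0]
    rw [← Finset.sum_subset hsub hout]
    have hin : ∀ k ∈ Finset.Icc 1 K,
        max ((p:ℝ)*q - (k:ℝ)*q - (l:ℝ)*p) 0 = ((p:ℝ)*q - (l:ℝ)*p) - (k:ℝ)*q := by
      intro k hk
      rw [Finset.mem_Icc] at hk
      have hkKR : (k:ℝ) ≤ (K:ℝ) := by exact_mod_cast hk.2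
      rw [show (p:ℝ)*q - (k:ℝ)*q - (l:ℝ)*p = ((p:ℝ)*q - (l:ℝ)*p) - (k:ℝ)*q from by ring]
      apply max_eq_left
      nlinarith [hq0]
    rw [Finset.sum_congr rfl hin, Finset.sum_sub_distrib, Finset.sum_const, nsmul_eq_mul,
      Nat.card_Icc, show K + 1 - 1 = K from by omega, ← Finset.sum_mul, sum_Icc_id_real]
    rw [eq_div_iff (by positivity : (2:ℝ)*(q:ℝ) ≠ 0)]
    linear_combination ((p:ℝ)*q - (l:ℝ)*p - (q:ℝ)*K - r) * hqK
  -- sum of r(q-r) over l via the multiplication-by-p bijection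
  have hrsum : ∑ l ∈ Finset.Icc 1 (q-1), ((q:ℝ) - (((l*p) % q : ℕ):ℝ))*((((l*p) % q : ℕ)):ℝ)
      = (q:ℝ)*((q:ℝ)*((q:ℝ)-1)/2) - (q:ℝ)*((q:ℝ)-1)*(2*(q:ℝ)-1)/6 := by
    rw [Icc_one_range (q-1) (fun l => ((q:ℝ) - (((l*p) % q : ℕ):ℝ))*((((l*p) % q : ℕ)):ℝ))
      (by simp)]
    rw [show q - 1 + 1 = q from by omega]
    rw [mulmod_bij q p (by omega) hpq (fun r => ((q:ℝ) - (r:ℝ))*(r:ℝ))]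
    rw [show (fun r : ℕ => ((q:ℝ) - (r:ℝ))*(r:ℝ)) = (fun r : ℕ => (q:ℝ)*(r:ℝ) - (r:ℝ)^2)
      from by funext r; ring]
    rw [Finset.sum_sub_distrib, ← Finset.mul_sum, sum_range_id_real, sum_range_sq_real]
  -- total sum of max terms
  have hT : ∑ kl ∈ (Finset.Icc 1 (p-1)) ×ˢ (Finset.Icc 1 (q-1)),
      max ((p:ℝ)*q - (kl.1:ℝ)*q - (kl.2:ℝ)*p) 0
      = (((q:ℝ)-1)*((p:ℝ)^2*(q:ℝ)^2 - (p:ℝ)*(q:ℝ)^2)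
          + (-2*(p:ℝ)^2*q + (p:ℝ)*q)*(((q:ℝ)-1)*q/2)
          + (p:ℝ)^2*(((q:ℝ)-1)*q*(2*(q:ℝ)-1)/6)
          + ((q:ℝ)*((q:ℝ)*((q:ℝ)-1)/2) - (q:ℝ)*((q:ℝ)-1)*(2*(q:ℝ)-1)/6)) / (2*(q:ℝ)) := by
    rw [Finset.sum_product, Finset.sum_comm, Finset.sum_congr rfl inner_max, ← Finset.sum_div]
    congr 1
    rw [show (fun l : ℕ => ((p:ℝ)*(q:ℝ) - (l:ℝ)*(p:ℝ))^2 - (q:ℝ)*((p:ℝ)*(q:ℝ) - (l:ℝ)*(p:ℝ))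
          + ((q:ℝ) - (((l*p) % q : ℕ):ℝ))*((((l*p) % q : ℕ)):ℝ))
        = (fun l : ℕ => (((p:ℝ)^2*(q:ℝ)^2 - (p:ℝ)*(q:ℝ)^2)
            + (-2*(p:ℝ)^2*(q:ℝ) + (p:ℝ)*(q:ℝ))*(l:ℝ) + (p:ℝ)^2*(l:ℝ)^2)
          + ((q:ℝ) - (((l*p) % q : ℕ):ℝ))*((((l*p) % q : ℕ)):ℝ)) from by funext l; ring]
    rw [Finset.sum_add_distrib, hrsum]
    congr 1
    rw [Finset.sum_add_distrib, Finset.sum_add_distrib, Finset.sum_const, nsmul_eq_mul, cardQ,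
      ← Finset.mul_sum, ← Finset.mul_sum, sumIdQ, sumSqQ]
  -- put things together
  have habs : ∀ kl : ℕ × ℕ, |(kl.1:ℝ)*q + (kl.2:ℝ)*p - (p:ℝ)*q|
      = ((kl.1:ℝ)*q + (kl.2:ℝ)*p - (p:ℝ)*q) + 2 * max ((p:ℝ)*q - (kl.1:ℝ)*q - (kl.2:ℝ)*p) 0 := by
    intro kl
    rw [show (p:ℝ)*q - (kl.1:ℝ)*q - (kl.2:ℝ)*p = -((kl.1:ℝ)*q + (kl.2:ℝ)*p - (p:ℝ)*q) from by ring]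
    exact abs_eq_self_add _
  rw [Finset.sum_congr rfl (fun kl _ => habs kl), Finset.sum_add_distrib, hzero,
    ← Finset.mul_sum, hT]
  field_simp
  ring


set_option maxHeartbeats 2000000 in
theorem riemann_sums_converge (p q : ℕ) (hp : 2 ≤ p) (hq : 2 ≤ q)
    (hpq : Nat.Coprime p q) :
    Filter.Tendsto
        (fun m : ℕ => (1/(m : ℝ)) * ∑ k ∈ Finset.Icc 1 (m - 1), (sigHat p q ((k : ℝ)/m) : ℝ))
        Filter.atTop (nhds (∫ x in (0:ℝ)..1, (sigHat p q x : ℝ)))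
      ∧ ∫ x in (0:ℝ)..1, (sigHat p q x : ℝ) =
          -(1/3) * ((p : ℝ) - 1/p) * ((q : ℝ) - 1/q) := by
  have hp0 : (0:ℝ) < p := by positivity
  have hq0 : (0:ℝ) < q := by positivity
  have hp1 : ((p - 1 : ℕ) : ℝ) = (p:ℝ) - 1 := by
    rw [Nat.cast_sub (by omega : 1 ≤ p)]; norm_num
  have hq1 : ((q - 1 : ℕ) : ℝ) = (q:ℝ) - 1 := by
    rw [Nat.cast_sub (by omega : 1 ≤ q)]; norm_num
  have hmem := sigma_mem_bounds p q hp hq hpq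
  have hinj := sigma_inj p q hp hq hpq
  have hcard : (((sigmaSet p q).card : ℕ):ℝ) = ((p:ℝ)-1)*((q:ℝ)-1) := by
    rw [sigmaSet, Finset.card_image_of_injOn
      (fun a ha b hb hab => hinj a (Finset.mem_coe.1 ha) b (Finset.mem_coe.1 hb) hab)]
    rw [Finset.card_product, Nat.card_Icc, Nat.card_Icc,
      show p - 1 + 1 - 1 = p - 1 from by omega, show q - 1 + 1 - 1 = q - 1 from by omega]
    rw [Nat.cast_mul, hp1, hq1]
  have hlen : ∑ y ∈ sigmaSet p q, (1 - |y - 1|) = ((p:ℝ)-1)*((q:ℝ)-1)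
      - (((p:ℝ)*q*((p:ℝ)-1)*((q:ℝ)-1)/2 - ((p:ℝ)^2-1)*((q:ℝ)^2-1)/6) / ((p:ℝ)*q)) := by
    rw [sigmaSet, Finset.sum_image hinj]
    have habs : ∀ kl : ℕ × ℕ, (1:ℝ) - |(kl.1:ℝ)/p + (kl.2:ℝ)/q - 1|
        = 1 - |(kl.1:ℝ)*q + (kl.2:ℝ)*p - (p:ℝ)*q| / ((p:ℝ)*q) := by
      intro kl
      congr 1
      rw [show (kl.1:ℝ)/p + (kl.2:ℝ)/q - 1 = ((kl.1:ℝ)*q + kl.2*p - p*q)/((p:ℝ)*q)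
        from by field_simp; try ring]
      rw [abs_div, abs_of_pos (by positivity : (0:ℝ) < (p:ℝ)*q)]
    rw [Finset.sum_congr rfl (fun kl _ => habs kl), Finset.sum_sub_distrib,
      Finset.sum_const, nsmul_eq_mul, Finset.card_product, Nat.card_Icc, Nat.card_Icc,
      show p - 1 + 1 - 1 = p - 1 from by omega, show q - 1 + 1 - 1 = q - 1 from by omega,
      Nat.cast_mul, hp1, hq1, ← Finset.sum_div, abs_sum_eval p q hp hq hpq]
    ring
  have hint : ∫ x in (0:ℝ)..1, (sigHat p q x : ℝ)
      = (((sigmaSet p q).card : ℕ):ℝ) - 2 * ∑ y ∈ sigmaSet p q, (1 - |y - 1|) := by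
    rw [intervalIntegral.integral_congr
      (g := fun x => (((sigmaSet p q).card : ℕ):ℝ)
        - 2*∑ y ∈ sigmaSet p q, (if x ∈ Set.Ioo (y-1) y then (1:ℝ) else 0))
      (fun x _ => sigHat_decomp p q x)]
    have hii : IntervalIntegrable
        (fun x => ∑ y ∈ sigmaSet p q, (if x ∈ Set.Ioo (y-1) y then (1:ℝ) else 0))
        MeasureTheory.volume 0 1 := by
      have h0 : IntervalIntegrable
          (∑ y ∈ sigmaSet p q, fun x => (if x ∈ Set.Ioo (y-1) y then (1:ℝ) else 0))
          MeasureTheory.volume 0 1 := IntervalIntegrable.sum _ (fun y _ => indicator_ii y)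
      have he : (∑ y ∈ sigmaSet p q, fun x => (if x ∈ Set.Ioo (y-1) y then (1:ℝ) else 0))
          = (fun x => ∑ y ∈ sigmaSet p q, (if x ∈ Set.Ioo (y-1) y then (1:ℝ) else 0)) := by
        funext x; simp
      rwa [he] at h0
    rw [intervalIntegral.integral_sub intervalIntegrable_const (hii.const_mul 2)]
    rw [intervalIntegral.integral_const_mul,
      intervalIntegral.integral_finset_sum (fun y _ => indicator_ii y)]
    rw [Finset.sum_congr rfl
      (fun y hy => indicator_integral y (hmem y hy).1 (hmem y hy).2.1 (hmem y hy).2.2)]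
    simp
  have hexpr : ∀ m : ℕ, 1 ≤ m →
      (1/(m : ℝ)) * ∑ k ∈ Finset.Icc 1 (m - 1), (sigHat p q ((k : ℝ)/m) : ℝ)
      = (((m-1:ℕ):ℝ)/m) * (((sigmaSet p q).card : ℕ):ℝ)
        - 2 * ∑ y ∈ sigmaSet p q, (rcount m y : ℝ)/m := by
    intro m hm
    have hm0 : (0:ℝ) < m := by exact_mod_cast hm
    rw [Finset.sum_congr rfl (fun (k : ℕ) (_ : k ∈ Finset.Icc 1 (m-1)) => sigHat_decomp p q ((k:ℝ)/m))]
    rw [Finset.sum_sub_distrib, Finset.sum_const, nsmul_eq_mul, Nat.card_Icc,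
      show m - 1 + 1 - 1 = m - 1 from by omega, ← Finset.mul_sum, Finset.sum_comm]
    have hcnt : ∀ y ∈ sigmaSet p q,
        ∑ k ∈ Finset.Icc 1 (m-1), (if (k:ℝ)/m ∈ Set.Ioo (y-1) y then (1:ℝ) else 0)
        = (rcount m y : ℝ) := by
      intro y hy
      rw [Finset.sum_boole]
      rfl
    rw [Finset.sum_congr rfl hcnt, ← Finset.sum_div]
    field_simp
  have htend : Filter.Tendsto
      (fun m : ℕ => (((m-1:ℕ):ℝ)/m) * (((sigmaSet p q).card : ℕ):ℝ)
        - 2 * ∑ y ∈ sigmaSet p q, (rcount m y : ℝ)/m)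
      Filter.atTop
      (nhds ((((sigmaSet p q).card : ℕ):ℝ) - 2 * ∑ y ∈ sigmaSet p q, (1 - |y - 1|))) := by
    apply Filter.Tendsto.sub
    · have h2 : Filter.Tendsto (fun m:ℕ => 1 - 1/(m:ℝ)) Filter.atTop (nhds 1) := by
        have hc : Filter.Tendsto (fun _ : ℕ => (1:ℝ)) Filter.atTop (nhds 1) :=
          tendsto_const_nhds
        have := hc.sub (tendsto_const_div_atTop_nhds_zero_nat 1)
        simpa using this
      have h1 : Filter.Tendsto (fun m:ℕ => ((m-1:ℕ):ℝ)/m) Filter.atTop (nhds 1) := by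
        apply h2.congr'
        filter_upwards [Filter.eventually_ge_atTop 1] with m hm
        have hm0 : (0:ℝ) < m := by exact_mod_cast hm
        rw [Nat.cast_sub hm, Nat.cast_one]
        field_simp
      simpa using h1.mul_const ((((sigmaSet p q).card : ℕ):ℝ))
    · apply Filter.Tendsto.const_mul
      apply tendsto_finset_sum
      intro y hy
      exact rcount_tendsto y (hmem y hy).1 (hmem y hy).2.1 (hmem y hy).2.2
  constructor
  · rw [hint]
    refine Filter.Tendsto.congr' ?_ htend
    filter_upwards [Filter.eventually_ge_atTop 1] with m hm
    exact (hexpr m hm).symm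
  · rw [hint, hlen, hcard]
    field_simp
    ring
end
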